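/- arXiv:2601.06295 — 5 statements merged into one kernel-verified Lean document; each statement's English description precedes it below -/
import Mathlib

section
/- For nonnegative integers a and b, the number of a × b matrices with entries in {0, 1, 2} that are weakly decreasing along each row and weakly decreasing down each column equals the Narayana number N(a+b+1, a+1) = (1/(a+b+1)) * C(a+b+1, a+1) * C(a+b+1, a). -/
open scoped BigOperators

/-- A Dyck word of length `2n`, encoded as a list of booleans where `true` is `u`
and `false` is `d`: `n` u's, `n` d's, and every prefix has at least as many u's as d's. -/
def IsDyckWord (n : ℕ) (w : List Bool) : Prop :=
  w.length = 2 * n ∧ w.count true = n ∧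
    ∀ t : ℕ, (w.take t).count false ≤ (w.take t).count true

/-- Position `i` of `w` is the start (the `d`) of a valley `du`. -/
def isValleyStart (w : List Bool) (i : ℕ) : Bool :=
  !(w.getD i true) && w.getD (i + 1) false

/-- The positions of the valleys of `w`, in increasing order. -/
def valleyPositions (w : List Bool) : List ℕ :=
  (List.range w.length).filter (isValleyStart w)

/-- The number of valleys (occurrences of `du`) in `w`. -/
def numValleys (w : List Bool) : ℕ :=
  (valleyPositions w).length

/-- The letter at position `t` of `w` is central: not first, not last, not part of a valley. -/
def isCentral (w : List Bool) (t : ℕ) : Bool :=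
  decide (0 < t) && decide (t + 1 < w.length) &&
    !(isValleyStart w t) && !(isValleyStart w (t - 1))

/-- `upCount w i` counts the central u's occurring before the `i`-th valley of `w`
(all central u's if `i` exceeds the number of valleys). -/
def upCount (w : List Bool) (i : ℕ) : ℕ :=
  ((List.range ((valleyPositions w).getD (i - 1) w.length)).filter
    (fun t => isCentral w t && w.getD t false)).length

/-- `downCount w i` counts the central d's occurring before the `i`-th valley of `w`. -/
def downCount (w : List Bool) (i : ℕ) : ℕ :=
  ((List.range ((valleyPositions w).getD (i - 1) w.length)).filter
    (fun t => isCentral w t && !(w.getD t true))).length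

/-- The width of the matrix `M` is at most `c`: along every weak diagonal
(a set of positions with nonzero entries that is a chain in the componentwise order),
the entries sum to at most `c`. -/
def widthLE {a b : ℕ} (M : Fin a → Fin b → ℕ) (c : ℕ) : Prop :=
  ∀ D : Finset (Fin a × Fin b),
    (∀ p ∈ D, M p.1 p.2 ≠ 0) →
    (∀ p ∈ D, ∀ q ∈ D, (p.1 ≤ q.1 ∧ p.2 ≤ q.2) ∨ (q.1 ≤ p.1 ∧ q.2 ≤ p.2)) →
    (∑ p ∈ D, M p.1 p.2) ≤ c

/-- An `a × b × c` plane partition: entries bounded by `c`, weakly decreasing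
along rows and columns. -/
def IsPlanePartition {a b : ℕ} (M : Fin a → Fin b → ℕ) (c : ℕ) : Prop :=
  (∀ i j, M i j ≤ c) ∧
  (∀ i, ∀ j j' : Fin b, j ≤ j' → M i j' ≤ M i j) ∧
  (∀ j, ∀ i i' : Fin a, i ≤ i' → M i' j ≤ M i j)

open Finset

/-- recursively defined count of pairs of nested antitone sequences -/
def hcount : ℕ → ℕ → ℕ → ℕ
  | 0, _, _ => 1
  | a+1, x, y => ∑ y' ∈ Finset.range (y+1), ∑ x' ∈ Finset.range (min x y' + 1), hcount a x' y'

lemma sum_choose_add (a c n : ℕ) :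
    ∑ i ∈ range n, ((a+i).choose c : ℤ) = ((a+n).choose (c+1) : ℤ) - (a.choose (c+1)) := by
  induction n with
  | zero => simp
  | succ n ih =>
      rw [Finset.sum_range_succ, ih]
      have : (a+(n+1)).choose (c+1) = (a+n).choose c + (a+n).choose (c+1) := by
        rw [show a+(n+1) = (a+n)+1 by ring, Nat.choose_succ_succ']
      rw [this]
      push_cast
      ring

lemma sum_choose_diag (a n : ℕ) :
    ∑ i ∈ range n, ((a+i).choose (i+1) : ℤ) = ((a+n).choose a : ℤ) - 1 := by
  induction n with
  | zero => simp
  | succ n ih =>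
      rw [Finset.sum_range_succ, ih]
      have key : ((a+n).choose (n+1) : ℤ) = ((a+(n+1)).choose a : ℤ) - ((a+n).choose a : ℤ) := by
        rcases a with _ | k
        · simp [Nat.choose_eq_zero_of_lt (by omega : n < n+1)]
        · have h1 : (k+1+(n+1)).choose (k+1) = (k+1+n).choose k + (k+1+n).choose (k+1) := by
            rw [show k+1+(n+1) = (k+1+n)+1 by ring, Nat.choose_succ_succ']
          have h2 : (k+1+n).choose (n+1) = (k+1+n).choose k := by
            have := Nat.choose_symm (n := k+1+n) (k := n+1) (by omega)
            rw [show k+1+n-(n+1) = k by omega] at this; exact this.symm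
          rw [h2, h1]
          push_cast
          ring
      rw [key]
      ring

lemma sumK_diag (a x : ℕ) :
    ∑ y' ∈ range x, (((a+y'+1).choose (a+1) : ℤ) * ((a+y').choose a)
      - ((a+y'+1).choose (a+2) : ℤ) * ((a+y').choose (y'+1)))
    = ((a+x).choose (a+1) : ℤ)^2 - ((a+x).choose (a+2) : ℤ) * ((a+x).choose x) := by
  induction x with
  | zero => simp [Nat.choose_eq_zero_of_lt (by omega : a < a+1), Nat.choose_eq_zero_of_lt (by omega : a < a+2)]
  | succ x ih =>
      rw [Finset.sum_range_succ, ih]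
      have p1 : ((a+x+1).choose (a+1) : ℤ) = (a+x).choose a + (a+x).choose (a+1) := by
        rw [Nat.choose_succ_succ']; push_cast; ring
      have p2 : ((a+x+1).choose (a+2) : ℤ) = (a+x).choose (a+1) + (a+x).choose (a+2) := by
        rw [show a+2 = (a+1)+1 from rfl, Nat.choose_succ_succ']; push_cast; ring
      have p3 : ((a+x+1).choose (x+1) : ℤ) = (a+x).choose x + (a+x).choose (x+1) := by
        rw [Nat.choose_succ_succ']; push_cast; ring
      have p4 : ((a+x).choose x : ℤ) = (a+x).choose a := by
        have := Nat.choose_symm (n := a+x) (k := x) (by omega)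
        rw [show a+x-x = a by omega] at this
        exact_mod_cast this.symm
      show _ = ((a+x+1).choose (a+1) : ℤ)^2 - ((a+x+1).choose (a+2) : ℤ) * ((a+x+1).choose (x+1))
      rw [p1, p2, p3, p4]
      ring

lemma hcount_eq (a : ℕ) : ∀ x y : ℕ, x ≤ y → (hcount a x y : ℤ) =
    ((a+x).choose a : ℤ) * ((a+y).choose a)
      - ((a+x).choose (a+1) : ℤ) * ((a+y).choose (y+1)) := by
  induction a with
  | zero =>
      intro x y hxy
      simp [hcount, Nat.choose_eq_zero_of_lt (by omega : y < y+1)]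
  | succ a ih =>
      intro x y hxy
      have sumF : ∀ (m y' : ℕ), ∑ x' ∈ range (m+1),
          (((a+x').choose a : ℤ) * ((a+y').choose a)
            - ((a+x').choose (a+1) : ℤ) * ((a+y').choose (y'+1)))
          = ((a+m+1).choose (a+1) : ℤ) * ((a+y').choose a)
            - ((a+m+1).choose (a+2) : ℤ) * ((a+y').choose (y'+1)) := by
        intro m y'
        rw [Finset.sum_sub_distrib, ← Finset.sum_mul, ← Finset.sum_mul,
          sum_choose_add a a (m+1), sum_choose_add a (a+1) (m+1)]
        simp [Nat.choose_eq_zero_of_lt (by omega : a < a+1),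
          Nat.choose_eq_zero_of_lt (by omega : a < a+2)]
        norm_num [show a+(m+1) = a+m+1 from rfl, show a+1+1 = a+2 from rfl]
      show ((∑ y' ∈ Finset.range (y+1), ∑ x' ∈ Finset.range (min x y' + 1), hcount a x' y' : ℕ) : ℤ) = _
      push_cast
      rw [Finset.sum_congr rfl (fun y' hy' => Finset.sum_congr rfl
        (fun x' hx' => ih x' y' (by simp only [Finset.mem_range] at hx' hy'; omega)))]
      rw [Finset.sum_congr rfl (fun y' _ => sumF (min x y') y')]
      rw [Finset.range_eq_Ico, ← Finset.sum_Ico_consecutive _ (Nat.zero_le x) (by omega : x ≤ y+1)]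
      rw [Finset.sum_congr (rfl : Finset.Ico 0 x = Finset.Ico 0 x)
        (fun y' hy' => by
          rw [show min x y' = y' by simp only [Finset.mem_Ico] at hy'; omega])]
      rw [Finset.sum_congr (rfl : Finset.Ico x (y+1) = Finset.Ico x (y+1))
        (fun y' hy' => by
          rw [show min x y' = x by simp only [Finset.mem_Ico] at hy'; omega])]
      rw [← Finset.range_eq_Ico, sumK_diag]
      rw [Finset.sum_sub_distrib, ← Finset.mul_sum, ← Finset.mul_sum]
      rw [Finset.sum_Ico_eq_sub _ (by omega : x ≤ y+1),
        Finset.sum_Ico_eq_sub (fun y' => (((a+y').choose (y'+1) : ℕ) : ℤ)) (by omega : x ≤ y+1)]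
      rw [sum_choose_add a a (y+1), sum_choose_add a a x, sum_choose_diag a (y+1), sum_choose_diag a x]
      rw [show a+1+x = a+x+1 by omega, show a+1+y = a+y+1 by omega]
      have q1 : (((a+y+1).choose (y+1) : ℕ) : ℤ) = ((a+y+1).choose a : ℕ) := by
        have := Nat.choose_symm (n := a+y+1) (k := y+1) (by omega)
        rw [show a+y+1-(y+1) = a by omega] at this
        exact_mod_cast this.symm
      have q2 : (((a+x+1).choose (a+1) : ℕ) : ℤ) = ((a+x).choose a : ℕ) + ((a+x).choose (a+1) : ℕ) := by
        rw [Nat.choose_succ_succ']; push_cast; ring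
      have q3 : (((a+x+1).choose (a+2) : ℕ) : ℤ) = ((a+x).choose (a+1) : ℕ) + ((a+x).choose (a+2) : ℕ) := by
        rw [show a+2 = (a+1)+1 from rfl, Nat.choose_succ_succ']; push_cast; ring
      have q4 : (((a+x).choose x : ℕ) : ℤ) = ((a+x).choose a : ℕ) := by
        have := Nat.choose_symm (n := a+x) (k := x) (by omega)
        rw [show a+x-x = a by omega] at this
        exact_mod_cast this.symm
      rw [show a+(y+1) = a+y+1 from rfl, show a+1+1 = a+2 from rfl] at *
      rw [q1, q2, q3, q4]
      ring

open Finset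

def PairsT (a x y : ℕ) : Type :=
  {p : (Fin a → ℕ) × (Fin a → ℕ) // Antitone p.1 ∧ Antitone p.2 ∧
    (∀ i, p.1 i ≤ p.2 i) ∧ (∀ i, p.1 i ≤ x) ∧ (∀ i, p.2 i ≤ y)}

noncomputable instance (a x y : ℕ) : Fintype (PairsT a x y) := by
  apply Fintype.ofInjective
    (fun p : PairsT a x y =>
      ((fun i => (⟨p.1.1 i, by have := p.2.2.2.2.1 i; omega⟩ : Fin (x+1))),
       (fun i => (⟨p.1.2 i, by have := p.2.2.2.2.2 i; omega⟩ : Fin (y+1)))))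
  intro p q h
  apply Subtype.ext
  obtain ⟨h1, h2⟩ := Prod.mk.injEq .. ▸ h
  exact Prod.ext (funext fun i => congrArg Fin.val (congrFun h1 i))
    (funext fun i => congrArg Fin.val (congrFun h2 i))

lemma antitone_cons {a : ℕ} (v : ℕ) (f : Fin a → ℕ) (hf : Antitone f)
    (hv : ∀ i, f i ≤ v) : Antitone (Fin.cons v f : Fin (a+1) → ℕ) := by
  intro i j hij
  induction j using Fin.cases with
  | zero =>
      have : i = 0 := le_antisymm hij (Fin.zero_le i)
      subst this; simp
  | succ j =>
      induction i using Fin.cases with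
      | zero => simpa using hv j
      | succ i =>
          simp only [Fin.cons_succ]
          exact hf (Fin.succ_le_succ_iff.mp hij)

lemma antitone_tail {a : ℕ} (f : Fin (a+1) → ℕ) (hf : Antitone f) :
    Antitone (Fin.tail f) :=
  fun i j hij => hf (Fin.succ_le_succ_iff.mpr hij)

def pairsEquiv (a x y : ℕ) :
    PairsT (a+1) x y ≃ Σ (y' : Fin (y+1)) (_x' : Fin (min x y'.val + 1)), PairsT a _x'.val y'.val where
  toFun p :=
    ⟨⟨p.1.2 0, by have := p.2.2.2.2.2 0; omega⟩,
     ⟨p.1.1 0, by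
       have h1 := p.2.2.2.2.1 0; have h2 := p.2.2.2.1 0
       show p.1.1 0 < min x (p.1.2 0) + 1
       omega⟩,
     ⟨(Fin.tail p.1.1, Fin.tail p.1.2),
      antitone_tail _ p.2.1, antitone_tail _ p.2.2.1,
      fun i => p.2.2.2.1 i.succ,
      fun i => p.2.1 (Fin.zero_le i.succ),
      fun i => p.2.2.1 (Fin.zero_le i.succ)⟩⟩
  invFun q :=
    ⟨(Fin.cons q.2.1.val q.2.2.1.1, Fin.cons q.1.val q.2.2.1.2),
     antitone_cons _ _ q.2.2.2.1 q.2.2.2.2.2.2.1,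
     antitone_cons _ _ q.2.2.2.2.1 q.2.2.2.2.2.2.2,
     by
       intro i
       induction i using Fin.cases with
       | zero =>
           simp only [Fin.cons_zero]
           have := q.2.1.isLt; omega
       | succ i => simpa using q.2.2.2.2.2.1 i,
     by
       intro i
       induction i using Fin.cases with
       | zero =>
           simp only [Fin.cons_zero]
           have := q.2.1.isLt; omega
       | succ i =>
           simp only [Fin.cons_succ]
           have h1 := q.2.2.2.2.2.2.1 i
           have h2 := q.2.1.isLt
           omega,
     by
       intro i
       induction i using Fin.cases with
       | zero =>
           simp only [Fin.cons_zero]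
           have := q.1.isLt; omega
       | succ i =>
           simp only [Fin.cons_succ]
           have h1 := q.2.2.2.2.2.2.2 i
           have h2 := q.1.isLt
           omega⟩
  left_inv p := Subtype.ext (Prod.ext (Fin.cons_self_tail _) (Fin.cons_self_tail _))
  right_inv q := rfl

lemma card_pairs : ∀ a x y : ℕ, Nat.card (PairsT a x y) = hcount a x y := by
  intro a
  induction a with
  | zero =>
      intro x y
      have : Nonempty (PairsT 0 x y) :=
        ⟨⟨(fun i => i.elim0, fun i => i.elim0),
          fun i => i.elim0, fun i => i.elim0, fun i => i.elim0, fun i => i.elim0, fun i => i.elim0⟩⟩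
      have : Subsingleton (PairsT 0 x y) := by
        constructor
        intro p q
        exact Subtype.ext (Prod.ext (funext fun i => i.elim0) (funext fun i => i.elim0))
      rw [Nat.card_unique]
      rfl
  | succ a ih =>
      intro x y
      rw [Nat.card_congr (pairsEquiv a x y), Nat.card_eq_fintype_card, Fintype.card_sigma]
      show _ = hcount (a+1) x y
      rw [hcount]
      rw [← Fin.sum_univ_eq_sum_range (fun y' => ∑ x' ∈ Finset.range (min x y' + 1), hcount a x' y') (y+1)]
      apply Finset.sum_congr rfl
      intro y' _
      rw [Fintype.card_sigma]
      rw [← Fin.sum_univ_eq_sum_range (fun x' => hcount a x' y'.val) (min x y'.val + 1)]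
      apply Finset.sum_congr rfl
      intro x' _
      rw [← Nat.card_eq_fintype_card, ih]

lemma card_filter_lt {b : ℕ} (m : ℕ) (hm : m ≤ b) :
    (Finset.univ.filter (fun j : Fin b => (j : ℕ) < m)).card = m := by
  have key : (Finset.univ.filter (fun j : Fin b => (j : ℕ) < m)).card = (Finset.range m).card := by
    refine Finset.card_bij' (fun (j : Fin b) _ => (j : ℕ))
      (fun k hk => (⟨k, lt_of_lt_of_le (Finset.mem_range.mp hk) hm⟩ : Fin b)) ?_ ?_ ?_ ?_
    · intro j hj
      simp only [Finset.mem_filter] at hj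
      exact Finset.mem_range.mpr hj.2
    · intro k hk
      simp only [Finset.mem_filter]
      exact ⟨Finset.mem_univ _, Finset.mem_range.mp hk⟩
    · intro j _; rfl
    · intro k _; rfl
  rw [key, Finset.card_range]

lemma seg {b : ℕ} (g : Fin b → ℕ) (hg : ∀ j j' : Fin b, j ≤ j' → g j' ≤ g j)
    (c : ℕ) (j : Fin b) :
    ((j : ℕ) < (Finset.univ.filter (fun j' => c ≤ g j')).card) ↔ c ≤ g j := by
  constructor
  · intro h
    by_contra hc
    have hsub : (Finset.univ.filter (fun j' => c ≤ g j')) ⊆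
        Finset.univ.filter (fun j' : Fin b => (j' : ℕ) < (j : ℕ)) := by
      intro j' hj'
      simp only [Finset.mem_filter] at hj' ⊢
      refine ⟨Finset.mem_univ _, ?_⟩
      by_contra hlt
      exact hc (le_trans hj'.2 (hg j j' (by rw [Fin.le_def]; omega)))
    have := Finset.card_le_card hsub
    rw [card_filter_lt (j : ℕ) (le_of_lt j.isLt)] at this
    omega
  · intro h
    have hsub : Finset.univ.filter (fun j' : Fin b => (j' : ℕ) < (j : ℕ) + 1) ⊆
        Finset.univ.filter (fun j' => c ≤ g j') := by
      intro j' hj'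
      simp only [Finset.mem_filter] at hj' ⊢
      exact ⟨Finset.mem_univ _, le_trans h (hg j' j (by rw [Fin.le_def]; omega))⟩
    have := Finset.card_le_card hsub
    rw [card_filter_lt ((j : ℕ) + 1) j.isLt] at this
    omega

noncomputable def ppEquiv (a b : ℕ) :
    {M : Fin a → Fin b → ℕ // IsPlanePartition M 2} ≃ PairsT a b b where
  toFun M :=
    ⟨(fun i => (Finset.univ.filter (fun j => 2 ≤ M.1 i j)).card,
      fun i => (Finset.univ.filter (fun j => 1 ≤ M.1 i j)).card),
     by
       intro i i' hii'
       dsimp only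
       apply Finset.card_le_card
       intro j hj
       simp only [Finset.mem_filter] at hj ⊢
       exact ⟨Finset.mem_univ _, le_trans hj.2 (M.2.2.2 j i i' hii')⟩,
     by
       intro i i' hii'
       dsimp only
       apply Finset.card_le_card
       intro j hj
       simp only [Finset.mem_filter] at hj ⊢
       exact ⟨Finset.mem_univ _, le_trans hj.2 (M.2.2.2 j i i' hii')⟩,
     fun i => Finset.card_le_card (fun j hj => by
       simp only [Finset.mem_filter] at hj ⊢
       exact ⟨Finset.mem_univ _, le_trans (by omega) hj.2⟩),
     fun i => le_trans (Finset.card_filter_le _ _) (by simp),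
     fun i => le_trans (Finset.card_filter_le _ _) (by simp)⟩
  invFun p :=
    ⟨fun i j => (if (j : ℕ) < p.1.1 i then 1 else 0) + (if (j : ℕ) < p.1.2 i then 1 else 0),
     by
       refine ⟨fun i j => by dsimp only; split_ifs <;> omega, fun i j j' hjj' => ?_, fun j i i' hii' => ?_⟩
       · have hj : (j : ℕ) ≤ (j' : ℕ) := hjj'
         dsimp only
         split_ifs <;> omega
       · have h1 := p.2.1 hii'
         have h2 := p.2.2.1 hii'
         dsimp only
         split_ifs <;> omega⟩
  left_inv := by
    rintro ⟨M, hM⟩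
    apply Subtype.ext
    funext i j
    have h2 := seg (M i) (hM.2.1 i) 2 j
    have h1 := seg (M i) (hM.2.1 i) 1 j
    have hb := hM.1 i j
    dsimp only
    split_ifs <;> omega
  right_inv := by
    rintro ⟨⟨s, t⟩, hs, ht, hst, hsx, hty⟩
    dsimp only at hst hsx hty
    apply Subtype.ext
    apply Prod.ext <;> funext i
    · have hiff : ∀ j : Fin b,
          (2 ≤ (if (j : ℕ) < s i then 1 else 0) + (if (j : ℕ) < t i then 1 else 0)) ↔
            ((j : ℕ) < s i) := fun j => by
        have := hst i; split_ifs <;> omega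
      show (Finset.univ.filter (fun j : Fin b =>
        2 ≤ (if (j : ℕ) < s i then 1 else 0) + (if (j : ℕ) < t i then 1 else 0))).card = s i
      rw [Finset.filter_congr (fun j _ => hiff j), card_filter_lt (s i) (hsx i)]
    · have hiff : ∀ j : Fin b,
          (1 ≤ (if (j : ℕ) < s i then 1 else 0) + (if (j : ℕ) < t i then 1 else 0)) ↔
            ((j : ℕ) < t i) := fun j => by
        have := hst i; split_ifs <;> omega
      show (Finset.univ.filter (fun j : Fin b =>
        1 ≤ (if (j : ℕ) < s i then 1 else 0) + (if (j : ℕ) < t i then 1 else 0))).card = t i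
      rw [Finset.filter_congr (fun j _ => hiff j), card_filter_lt (t i) (hty i)]

/-- the number of a × b × 2 plane partitions is the Narayana number
N(a+b+1, a+1). -/
theorem planePartitions_height_two_narayana (a b : ℕ) :
    ({M : Fin a → Fin b → ℕ | IsPlanePartition M 2}.ncard : ℚ) =
    (1 / (a + b + 1 : ℚ)) * (Nat.choose (a + b + 1) (a + 1)) * (Nat.choose (a + b + 1) a) := by
  have hcard : {M : Fin a → Fin b → ℕ | IsPlanePartition M 2}.ncard = hcount a b b := by
    rw [← Nat.card_coe_set_eq]
    exact (Nat.card_congr (ppEquiv a b)).trans (card_pairs a b b)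
  rw [hcard]
  have hZ := hcount_eq a b b le_rfl
  have hQ : (hcount a b b : ℚ) = ((a+b).choose a : ℚ) * ((a+b).choose a)
      - ((a+b).choose (a+1) : ℚ) * ((a+b).choose (b+1)) := by
    exact_mod_cast hZ
  rw [hQ]
  have ha : ((a : ℚ) + 1) ≠ 0 := by positivity
  have hb : ((b : ℚ) + 1) ≠ 0 := by positivity
  have hn : ((a : ℚ) + b + 1) ≠ 0 := by positivity
  have hA : ((a+b).choose b : ℚ) = ((a+b).choose a : ℚ) := by
    have := Nat.choose_symm (n := a+b) (k := a) (by omega)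
    rw [show a+b-a = b by omega] at this
    exact_mod_cast this
  have e1 : ((a+b).choose (a+1) : ℚ) = ((a+b).choose a : ℚ) * b / ((a:ℚ)+1) := by
    rw [eq_div_iff ha]
    have := Nat.choose_succ_right_eq (a+b) a
    rw [show a+b-a = b by omega] at this
    exact_mod_cast this
  have e2 : ((a+b).choose (b+1) : ℚ) = ((a+b).choose a : ℚ) * a / ((b:ℚ)+1) := by
    rw [eq_div_iff hb, ← hA]
    have := Nat.choose_succ_right_eq (a+b) b
    rw [show a+b-b = a by omega] at this
    exact_mod_cast this
  have e3 : ((a+b+1).choose (a+1) : ℚ) = ((a:ℚ)+b+1) * ((a+b).choose a : ℚ) / ((a:ℚ)+1) := by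
    rw [eq_div_iff ha]
    have h := Nat.add_one_mul_choose_eq (a+b) a
    exact_mod_cast h.symm
  have e4 : ((a+b+1).choose a : ℚ) = ((a:ℚ)+b+1) * ((a+b).choose a : ℚ) / ((b:ℚ)+1) := by
    rw [eq_div_iff hb]
    have hsymm : (a+b+1).choose a = (a+b+1).choose (b+1) := by
      have := Nat.choose_symm (n := a+b+1) (k := a) (by omega)
      rw [show a+b+1-a = b+1 by omega] at this
      exact this.symm
    rw [hsymm, ← hA]
    have h := Nat.add_one_mul_choose_eq (a+b) b
    exact_mod_cast h.symm
  rw [e1, e2, e3, e4]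
  field_simp
  ring
end

section
/- For nonnegative integers a, b, c, the number of a × b matrices of nonnegative integers bounded above by c that are weakly decreasing along rows and columns equals the product over i from 1 to c of [C(a+b+i-1, a+i-1) * C(a+b+i-1, b+i-1)] / [C(a+b+i-1, a) * C(b+i-1, b)]. -/
open scoped BigOperators

-- ===== auxiliary development (proof of MacMahon box formula) =====
open Finset



/-- sum of binomials over a range, in ℚ. -/
lemma sum_range_choose_q (N j : ℕ) :
    (∑ m ∈ Finset.range N, ((m.choose j : ℚ))) = ((N.choose (j+1) : ℚ)) := by
  induction N with
  | zero => simp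
  | succ N ih => rw [Finset.sum_range_succ, ih]; push_cast [Nat.choose_succ_succ N j]; ring

lemma sum_Icc_choose_q (A B j : ℕ) (h : A ≤ B + 1) :
    (∑ m ∈ Finset.Icc A B, ((m.choose j : ℚ)))
      = ((B+1).choose (j+1) : ℚ) - (A.choose (j+1) : ℚ) := by
  have : Finset.Icc A B = Finset.range (B+1) \ Finset.range A := by
    ext x; simp [Nat.lt_succ_iff]; omega
  rw [this, Finset.sum_sdiff_eq_sub (by simp [Finset.range_subset]; omega),
    sum_range_choose_q, sum_range_choose_q]

/-- the box of interlacing rows below a top row. -/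
def gtBox (n : ℕ) (lam : Fin (n+1) → ℕ) : Finset (Fin n → ℕ) :=
  Fintype.piFinset fun i => Finset.Icc (lam i.castSucc) (lam i.succ)

/-- number of Gelfand-Tsetlin patterns with given top row (rows weakly increasing). -/
def GTcount : (n : ℕ) → (Fin n → ℕ) → ℕ
  | 0, _ => 1
  | n+1, lam => ∑ mu ∈ gtBox n lam, GTcount n mu

def chooseMat (n : ℕ) (l : Fin n → ℕ) : Matrix (Fin n) (Fin n) ℚ :=
  Matrix.of fun i j => ((l i).choose (j : ℕ) : ℚ)

lemma det_choose_reduce (n : ℕ) (L : Fin (n+1) → ℕ) :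
    (chooseMat (n+1) L).det =
      (Matrix.of fun (i j : Fin n) =>
        (((L i.succ).choose ((j:ℕ)+1) : ℚ) - ((L i.castSucc).choose ((j:ℕ)+1) : ℚ))).det := by
  set A := chooseMat (n+1) L with hA
  set B : Matrix (Fin (n+1)) (Fin (n+1)) ℚ :=
    Matrix.of fun i j => Fin.cases (A 0 j) (fun i' => A i'.succ j - A i'.castSucc j) i with hB
  have hdet : A.det = B.det := by
    apply Matrix.det_eq_of_forall_row_eq_smul_add_pred (fun _ => (1:ℚ))
    · intro j; simp [hB]
    · intro i j; simp [hB]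
  rw [hdet, Matrix.det_succ_column_zero]
  have hB0 : ∀ i : Fin (n+1), B i 0 = if i = 0 then 1 else 0 := by
    intro i
    induction i using Fin.cases with
    | zero => simp [hB, hA, chooseMat]
    | succ i' => simp [hB, hA, chooseMat, Fin.succ_ne_zero]
  rw [Finset.sum_eq_single 0]
  · rw [hB0]
    simp only [if_pos rfl]
    rw [Fin.succAbove_zero]
    have : (B.submatrix Fin.succ Fin.succ) =
        Matrix.of (fun (i j : Fin n) =>
          (((L i.succ).choose ((j:ℕ)+1) : ℚ) - ((L i.castSucc).choose ((j:ℕ)+1) : ℚ))) := by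
      ext i j
      simp [hB, hA, chooseMat, Matrix.submatrix]
    rw [this]
    simp
  · intro i _ hne
    rw [hB0, if_neg hne]; ring
  · intro h; exact absurd (Finset.mem_univ 0) h

theorem gtcount_eq_det (n : ℕ) (lam : Fin n → ℕ) (hm : Monotone lam) :
    ((GTcount n lam : ℚ)) = (chooseMat n (fun i => lam i + (i:ℕ))).det := by
  induction n with
  | zero => simp [GTcount, chooseMat]
  | succ n ih =>
    have hmem : ∀ mu ∈ gtBox n lam, Monotone mu := by
      intro mu hmu
      have h' := Fintype.mem_piFinset.mp hmu
      intro i j hij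
      rcases eq_or_lt_of_le hij with h | h
      · subst h; rfl
      · calc mu i ≤ lam i.succ := (Finset.mem_Icc.mp (h' i)).2
          _ ≤ lam j.castSucc := hm (by simp [Fin.le_def]; omega)
          _ ≤ mu j := (Finset.mem_Icc.mp (h' j)).1
    rw [show GTcount (n+1) lam = ∑ mu ∈ gtBox n lam, GTcount n mu from rfl]
    push_cast
    rw [Finset.sum_congr rfl (fun mu hmu => ih mu (hmem mu hmu))]
    -- use multilinearity
    set f := (Matrix.detRowAlternating (R := ℚ) (n := Fin n)).toMultilinearMap with hf
    have key := f.map_sum_finset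
      (fun (i : Fin n) (x : ℕ) => (fun j : Fin n => ((x + (i:ℕ)).choose (j:ℕ) : ℚ)))
      (fun i => Finset.Icc (lam i.castSucc) (lam i.succ))
    have lhs_eq : ∀ mu : Fin n → ℕ, (chooseMat n (fun i => mu i + (i:ℕ))).det
        = f (fun i (j : Fin n) => ((mu i + (i:ℕ)).choose (j:ℕ) : ℚ)) := by
      intro mu; rfl
    rw [Finset.sum_congr rfl (fun mu _ => lhs_eq mu)]
    rw [show (gtBox n lam) = Fintype.piFinset (fun i => Finset.Icc (lam i.castSucc) (lam i.succ)) from rfl]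
    rw [← key]
    -- now evaluate the summed rows via hockey stick
    have row_eq : (fun (i : Fin n) => ∑ x ∈ Finset.Icc (lam i.castSucc) (lam i.succ),
          (fun j : Fin n => ((x + (i:ℕ)).choose (j:ℕ) : ℚ)))
        = fun i (j : Fin n) => (((lam i.succ + (i.succ:ℕ)).choose ((j:ℕ)+1) : ℚ)
            - ((lam i.castSucc + (i.castSucc:ℕ)).choose ((j:ℕ)+1) : ℚ)) := by
      funext i j
      simp only [Finset.sum_apply]
      have h1 : ∑ x ∈ Finset.Icc (lam i.castSucc) (lam i.succ), ((x + (i:ℕ)).choose (j:ℕ) : ℚ)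
          = ∑ m ∈ Finset.Icc (lam i.castSucc + (i:ℕ)) (lam i.succ + (i:ℕ)), ((m.choose (j:ℕ) : ℚ)) := by
        rw [← Finset.map_add_right_Icc, Finset.sum_map]
        rfl
      rw [h1, sum_Icc_choose_q]
      · have : lam i.succ + (i:ℕ) + 1 = lam i.succ + (i.succ : ℕ) := by simp; omega
        rw [this]
        simp
      · have := hm (Fin.castSucc_le_succ i)
        omega
    rw [row_eq]
    rw [show f (fun i (j : Fin n) =>
        (((lam i.succ + (i.succ:ℕ)).choose ((j:ℕ)+1) : ℚ)
          - ((lam i.castSucc + (i.castSucc:ℕ)).choose ((j:ℕ)+1) : ℚ)))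
      = (Matrix.of fun (i j : Fin n) =>
        ((((fun k : Fin (n+1) => lam k + (k:ℕ)) i.succ).choose ((j:ℕ)+1) : ℚ)
          - (((fun k : Fin (n+1) => lam k + (k:ℕ)) i.castSucc).choose ((j:ℕ)+1) : ℚ))).det from rfl]
    rw [← det_choose_reduce n (fun k => lam k + (k:ℕ))]



theorem det_chooseMat (n : ℕ) (l : Fin n → ℕ) :
    (∏ j : Fin n, (((j:ℕ).factorial : ℚ))) * (chooseMat n l).det
      = ∏ i : Fin n, ∏ j ∈ Finset.Ioi i, ((l j : ℚ) - (l i : ℚ)) := by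
  have h := Matrix.det_eval_matrixOfPolynomials_eq_det_vandermonde
    (fun i => ((l i : ℚ))) (fun j : Fin n => descPochhammer ℚ (j:ℕ))
    (fun j => descPochhammer_natDegree ℚ (j:ℕ)) (fun j => monic_descPochhammer ℚ (j:ℕ))
  rw [Matrix.det_vandermonde] at h
  rw [h]
  have : (Matrix.of fun (i j : Fin n) => Polynomial.eval ((l i : ℚ)) (descPochhammer ℚ (j:ℕ)))
      = Matrix.of fun (i j : Fin n) => (((j:ℕ).factorial : ℚ)) * (chooseMat n l) i j := by
    ext i j
    rw [Matrix.of_apply, descPochhammer_eval_eq_descFactorial ℚ (l i) (j:ℕ)]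
    rw [Nat.descFactorial_eq_factorial_mul_choose]
    push_cast
    rfl
  rw [show (Matrix.of fun (i j : Fin n) => Polynomial.eval ((fun i => ((l i : ℚ))) i) ((fun (j : Fin n) => descPochhammer ℚ (j:ℕ)) j)) = (Matrix.of fun (i j : Fin n) => Polynomial.eval ((l i : ℚ)) (descPochhammer ℚ (j:ℕ))) from rfl, this, Matrix.det_mul_row]


noncomputable local instance : DecidableEq (ℕ → ℕ → ℕ) := Classical.decEq _

def extendTop (m : ℕ) (lam : Fin m → ℕ) (g : ℕ → ℕ → ℕ) : ℕ → ℕ → ℕ :=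
  fun k i => if k = m then (if h : i < m then lam ⟨i, h⟩ else 0) else g k i

noncomputable def GTFinset : (n : ℕ) → (Fin n → ℕ) → Finset (ℕ → ℕ → ℕ)
  | 0, _ => {fun _ _ => 0}
  | n+1, lam => (gtBox n lam).biUnion fun mu => (GTFinset n mu).image (extendTop (n+1) lam)

def GTSet (n : ℕ) (lam : Fin n → ℕ) : Set (ℕ → ℕ → ℕ) :=
  { g | (∀ i : Fin n, g n (i:ℕ) = lam i)
    ∧ (∀ k i, (n < k ∨ k ≤ i) → g k i = 0)
    ∧ (∀ k i, k < n → i < k → g (k+1) i ≤ g k i ∧ g k i ≤ g (k+1) (i+1)) }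


lemma extendTop_ne {m : ℕ} {lam : Fin m → ℕ} {g : ℕ → ℕ → ℕ} {k i : ℕ} (hk : k ≠ m) :
    extendTop m lam g k i = g k i := by simp [extendTop, hk]

lemma extendTop_top {m : ℕ} {lam : Fin m → ℕ} {g : ℕ → ℕ → ℕ} {i : ℕ} (hi : i < m) :
    extendTop m lam g m i = lam ⟨i, hi⟩ := by simp [extendTop, hi]

lemma extendTop_top' {m : ℕ} {lam : Fin m → ℕ} {g : ℕ → ℕ → ℕ} {i : ℕ} (hi : ¬ i < m) :
    extendTop m lam g m i = 0 := by simp [extendTop, hi]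

lemma mem_GTFinset : ∀ (n : ℕ) (lam : Fin n → ℕ) (g : ℕ → ℕ → ℕ),
    g ∈ GTFinset n lam ↔ g ∈ GTSet n lam := by
  intro n
  induction n with
  | zero =>
    intro lam g
    simp only [GTFinset, Finset.mem_singleton, GTSet, Set.mem_setOf_eq]
    constructor
    · rintro rfl
      refine ⟨fun i => i.elim0, fun k i _ => rfl, fun k i hk hik => by omega⟩
    · rintro ⟨-, h2, -⟩
      funext k i
      exact h2 k i (by omega)
  | succ n ih =>
    intro lam g
    simp only [GTFinset, Finset.mem_biUnion, Finset.mem_image]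
    constructor
    · rintro ⟨mu, hmu, g', hg', rfl⟩
      obtain ⟨h1, h2, h3⟩ := (ih mu g').mp hg'
      have hbox := Fintype.mem_piFinset.mp hmu
      refine ⟨?_, ?_, ?_⟩
      · intro i
        rw [extendTop_top i.isLt]
      · intro k i hki
        by_cases hk : k = n + 1
        · subst hk
          rw [extendTop_top' (by omega)]
        · rw [extendTop_ne hk]
          exact h2 k i (by omega)
      · intro k i hk hik
        rcases Nat.lt_or_ge k n with hkn | hkn
        · simp only [extendTop_ne (show k + 1 ≠ n + 1 by omega), extendTop_ne (show k ≠ n + 1 by omega)]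
          exact h3 k i hkn hik
        · have hkn' : k = n := by omega
          rw [hkn'] at hik ⊢
          rw [extendTop_ne (by omega : n ≠ n + 1),
            extendTop_top (by omega : i < n + 1), extendTop_top (by omega : i + 1 < n + 1)]
          have hmui := Finset.mem_Icc.mp (hbox ⟨i, hik⟩)
          have hval : g' n i = mu ⟨i, hik⟩ := h1 ⟨i, hik⟩
          rw [hval]
          exact ⟨hmui.1, hmui.2⟩
    · rintro ⟨h1, h2, h3⟩
      refine ⟨fun i => g n (i:ℕ), ?_, fun k i => if k ≤ n then g k i else 0, ?_, ?_⟩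
      · apply Fintype.mem_piFinset.mpr
        intro i
        rw [Finset.mem_Icc]
        have h3n := h3 n i (by omega) i.isLt
        have e1 : g (n+1) (i:ℕ) = lam i.castSucc := by
          have := h1 i.castSucc; simpa using this
        have e2 : g (n+1) ((i:ℕ)+1) = lam i.succ := by
          have := h1 i.succ; simpa using this
        rw [e1, e2] at h3n
        exact h3n
      · apply (ih _ _).mpr
        refine ⟨fun i => by simp, ?_, ?_⟩
        · intro k i hki
          dsimp only
          split_ifs with hk
          · exact h2 k i (by omega)
          · rfl
        · intro k i hk hik
          simp only [if_pos (show k + 1 ≤ n by omega), if_pos (show k ≤ n by omega)]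
          exact h3 k i (by omega) hik
      · funext k i
        by_cases hk : k = n + 1
        · subst hk
          by_cases hi : i < n + 1
          · rw [extendTop_top hi]
            exact (h1 ⟨i, hi⟩).symm
          · rw [extendTop_top' hi]
            exact (h2 (n+1) i (by omega)).symm
        · rw [extendTop_ne hk]
          split_ifs with hkn
          · rfl
          · exact (h2 k i (by omega)).symm

lemma card_GTFinset : ∀ (n : ℕ) (lam : Fin n → ℕ),
    (GTFinset n lam).card = GTcount n lam := by
  intro n
  induction n with
  | zero => intro lam; simp [GTFinset, GTcount]
  | succ n ih =>
    intro lam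
    rw [show GTFinset (n+1) lam
        = (gtBox n lam).biUnion (fun mu => (GTFinset n mu).image (extendTop (n+1) lam)) from rfl]
    rw [Finset.card_biUnion, show GTcount (n+1) lam = ∑ mu ∈ gtBox n lam, GTcount n mu from rfl]
    · apply Finset.sum_congr rfl
      intro mu _
      rw [Finset.card_image_of_injOn, ih mu]
      intro x hx y hy hxy
      have hx' := ((mem_GTFinset n mu x).mp hx).2.1
      have hy' := ((mem_GTFinset n mu y).mp hy).2.1
      funext k i
      by_cases hk : k = n + 1
      · rw [hx' k i (by omega), hy' k i (by omega)]
      · have := congrFun (congrFun hxy k) i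
        simpa [extendTop, hk] using this
    · intro mu hmu nu hnu hne
      simp only [Finset.disjoint_left]
      intro x hxmu hxnu
      apply hne
      obtain ⟨gx, hgx, hex⟩ := Finset.mem_image.mp hxmu
      obtain ⟨gy, hgy, hey⟩ := Finset.mem_image.mp hxnu
      have h1x := ((mem_GTFinset n mu gx).mp hgx).1
      have h1y := ((mem_GTFinset n nu gy).mp hgy).1
      funext i
      rw [← h1x i, ← h1y i]
      have : extendTop (n+1) lam gx n (i:ℕ) = extendTop (n+1) lam gy n (i:ℕ) := by
        rw [hex, hey]
      simpa [extendTop] using this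

section chains

variable {n : ℕ} {lam : Fin n → ℕ} {g : ℕ → ℕ → ℕ}

lemma chain_left (hg : g ∈ GTSet n lam) :
    ∀ d k i, i < k → k + d = n → g n i ≤ g k i := by
  intro d
  induction d with
  | zero => intro k i _ hk; rw [show k = n by omega]
  | succ d ih =>
    intro k i hik hk
    exact le_trans (ih (k+1) i (by omega) (by omega)) (hg.2.2 k i (by omega) hik).1

lemma chain_right (hg : g ∈ GTSet n lam) :
    ∀ d k i, i < k → k + d = n → g k i ≤ g n (i + d) := by
  intro d
  induction d with
  | zero => intro k i _ hk; rw [show k = n by omega]; rfl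
  | succ d ih =>
    intro k i hik hk
    calc g k i ≤ g (k+1) (i+1) := (hg.2.2 k i (by omega) hik).2
      _ ≤ g n (i + 1 + d) := ih (k+1) (i+1) (by omega) (by omega)
      _ = g n (i + (d+1)) := by ring_nf

end chains

section ppgt

variable (a b c : ℕ)

def topLam : Fin (a+b) → ℕ := fun i => if (i:ℕ) < b then 0 else c

variable {a b c}

section glem

variable {g : ℕ → ℕ → ℕ} (hg : g ∈ GTSet (a+b) (topLam a b c))
include hg

lemma g_le_c {k i : ℕ} (hk : k ≤ a + b) (hik : i < k) : g k i ≤ c := by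
  rcases Nat.eq_or_lt_of_le hk with rfl | hlt
  · rw [hg.1 ⟨i, hik⟩]
    unfold topLam
    split_ifs <;> omega
  · calc g k i ≤ g (a+b) (i + (a + b - k)) := chain_right hg (a+b-k) k i hik (by omega)
      _ = topLam a b c ⟨i + (a+b-k), by omega⟩ := hg.1 ⟨i + (a+b-k), by omega⟩
      _ ≤ c := by unfold topLam; split_ifs <;> omega

lemma g_eq_c {k i : ℕ} (hk : k ≤ a + b) (hik : i < k) (hbi : b ≤ i) : g k i = c := by
  refine le_antisymm (g_le_c hg hk hik) ?_
  have h1 : g (a+b) i ≤ g k i := chain_left hg (a+b-k) k i hik (by omega)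
  have h2 : g (a+b) i = topLam a b c ⟨i, by omega⟩ := hg.1 ⟨i, by omega⟩
  have h3 : topLam a b c ⟨i, by omega⟩ = c := by unfold topLam; rw [if_neg (by simpa using by omega)]
  omega

lemma g_eq_zero {k i : ℕ} (hk : k ≤ a + b) (hik : i < k) (hai : a + i < k) : g k i = 0 := by
  have h1 : g k i ≤ g (a+b) (i + (a+b-k)) := chain_right hg (a+b-k) k i hik (by omega)
  have h2 : g (a+b) (i + (a+b-k)) = topLam a b c ⟨i + (a+b-k), by omega⟩ :=
    hg.1 ⟨i + (a+b-k), by omega⟩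
  have h3 : topLam a b c ⟨i + (a+b-k), by omega⟩ = 0 := by
    unfold topLam; rw [if_pos (by simpa using by omega)]
  omega

end glem

variable (a b c) in
def ppToGT (M : Fin a → Fin b → ℕ) : ℕ → ℕ → ℕ := fun k i =>
  if h : i < k ∧ k ≤ a + i ∧ i < b ∧ k ≤ a + b then
    M ⟨k - i - 1, by omega⟩ ⟨b - i - 1, by omega⟩
  else if i < k ∧ k ≤ a + b ∧ b ≤ i then c else 0

variable (a b) in
def gtToPP (g : ℕ → ℕ → ℕ) : Fin a → Fin b → ℕ := fun r s => g ((r:ℕ) + b - s) (b - (s:ℕ) - 1)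

lemma Mmono {M : Fin a → Fin b → ℕ} (hM : IsPlanePartition M c)
    {r r' : Fin a} {s s' : Fin b} (hr : r ≤ r') (hs : s ≤ s') : M r' s' ≤ M r s :=
  le_trans (hM.2.2 s' r r' hr) (hM.2.1 r s s' hs)

lemma ppToGT_mem {M : Fin a → Fin b → ℕ} (hM : IsPlanePartition M c) :
    ppToGT a b c M ∈ GTSet (a+b) (topLam a b c) := by
  refine ⟨?_, ?_, ?_⟩
  · intro i
    unfold ppToGT topLam
    have hi := i.isLt
    split_ifs with h1 h2 h3 h4 h5 <;> first | rfl | omega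
  · intro k i hki
    unfold ppToGT
    split_ifs with h1 h2 <;> first | rfl | omega
  · intro k i hk hik
    constructor
    · -- g (k+1) i ≤ g k i
      unfold ppToGT
      split_ifs <;>
        first
          | omega
          | exact Nat.zero_le _
          | exact hM.1 _ _
          | exact Mmono hM (by simp only [Fin.mk_le_mk] <;> omega) (by simp only [Fin.mk_le_mk] <;> omega)
    · -- g k i ≤ g (k+1) (i+1)
      unfold ppToGT
      split_ifs <;>
        first
          | omega
          | exact Nat.zero_le _
          | exact hM.1 _ _
          | exact Mmono hM (by simp only [Fin.mk_le_mk] <;> omega) (by simp only [Fin.mk_le_mk] <;> omega)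

lemma gtToPP_isPP {g : ℕ → ℕ → ℕ} (hg : g ∈ GTSet (a+b) (topLam a b c)) :
    IsPlanePartition (gtToPP a b g) c := by
  have hrow : ∀ (r : Fin a) (s s' : Fin b), (s':ℕ) = (s:ℕ) + 1 →
      gtToPP a b g r s' ≤ gtToPP a b g r s := by
    intro r s s' hss
    have hr := r.isLt; have hs := s.isLt; have hs' := s'.isLt
    unfold gtToPP
    have := (hg.2.2 ((r:ℕ) + b - s - 1) (b - s - 2) (by omega) (by omega)).2
    have e1 : (r:ℕ) + b - s - 1 + 1 = (r:ℕ) + b - s := by omega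
    have e2 : b - (s:ℕ) - 2 + 1 = b - s - 1 := by omega
    rw [e1, e2] at this
    have e3 : (r:ℕ) + b - (s':ℕ) = (r:ℕ) + b - s - 1 := by omega
    have e4 : b - (s':ℕ) - 1 = b - (s:ℕ) - 2 := by omega
    rw [e3, e4]
    exact this
  have hcol : ∀ (r r' : Fin a) (s : Fin b), (r':ℕ) = (r:ℕ) + 1 →
      gtToPP a b g r' s ≤ gtToPP a b g r s := by
    intro r r' s hrr
    have hr := r.isLt; have hs := s.isLt; have hr' := r'.isLt
    unfold gtToPP
    have := (hg.2.2 ((r:ℕ) + b - s) (b - (s:ℕ) - 1) (by omega) (by omega)).1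
    have e1 : (r':ℕ) + b - (s:ℕ) = (r:ℕ) + b - (s:ℕ) + 1 := by omega
    rw [e1]
    exact this
  refine ⟨?_, ?_, ?_⟩
  · intro r s
    have hr := r.isLt; have hs := s.isLt
    exact g_le_c hg (by omega) (by omega)
  · intro r s s' hss
    have key : ∀ t : ℕ, ∀ (s s' : Fin b), (s':ℕ) = (s:ℕ) + t →
        gtToPP a b g r s' ≤ gtToPP a b g r s := by
      intro t
      induction t with
      | zero =>
        intro s s' h
        exact le_of_eq (by congr 1; exact Fin.ext (by omega))
      | succ t ih =>
        intro s s' h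
        have hs' := s'.isLt
        calc gtToPP a b g r s' ≤ gtToPP a b g r ⟨(s:ℕ) + t, by omega⟩ :=
              hrow r ⟨(s:ℕ) + t, by omega⟩ s' (by simpa using by omega)
          _ ≤ gtToPP a b g r s := ih s ⟨(s:ℕ) + t, by omega⟩ (by simp)
    exact key ((s':ℕ) - (s:ℕ)) s s' (by omega)
  · intro s r r' hrr
    have key : ∀ t : ℕ, ∀ (r r' : Fin a), (r':ℕ) = (r:ℕ) + t →
        gtToPP a b g r' s ≤ gtToPP a b g r s := by
      intro t
      induction t with
      | zero =>
        intro r r' h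
        exact le_of_eq (by congr 1; exact Fin.ext (by omega))
      | succ t ih =>
        intro r r' h
        have hr' := r'.isLt
        calc gtToPP a b g r' s ≤ gtToPP a b g ⟨(r:ℕ) + t, by omega⟩ s :=
              hcol ⟨(r:ℕ) + t, by omega⟩ r' s (by simpa using by omega)
          _ ≤ gtToPP a b g r s := ih r ⟨(r:ℕ) + t, by omega⟩ (by simp)
    exact key ((r':ℕ) - (r:ℕ)) r r' (by omega)

lemma gtToPP_ppToGT (M : Fin a → Fin b → ℕ) : gtToPP a b (ppToGT a b c M) = M := by
  funext r s
  unfold gtToPP ppToGT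
  rw [dif_pos (by constructor; omega; constructor; omega; constructor; omega; omega)]
  congr 1 <;> · ext; simp; omega

lemma ppToGT_gtToPP {g : ℕ → ℕ → ℕ} (hg : g ∈ GTSet (a+b) (topLam a b c)) :
    ppToGT a b c (gtToPP a b g) = g := by
  funext k i
  unfold ppToGT
  split_ifs with h1 h2
  · unfold gtToPP
    congr 1 <;> · simp only [Fin.val_mk]; omega
  · exact (g_eq_c hg (by omega) (by omega) (by omega)).symm
  · by_cases hik : i < k
    · by_cases hkn : k ≤ a + b
      · exact (g_eq_zero hg hkn hik (by omega)).symm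
      · exact (hg.2.1 k i (by omega)).symm
    · exact (hg.2.1 k i (by omega)).symm

lemma pp_set_eq : {M : Fin a → Fin b → ℕ | IsPlanePartition M c}
    = gtToPP a b '' (GTSet (a+b) (topLam a b c)) := by
  ext M
  constructor
  · intro hM
    exact ⟨ppToGT a b c M, ppToGT_mem hM, gtToPP_ppToGT M⟩
  · rintro ⟨g, hg, rfl⟩
    exact gtToPP_isPP hg

lemma gtToPP_injOn : Set.InjOn (gtToPP a b) (GTSet (a+b) (topLam a b c)) := by
  intro g hg g' hg' h
  rw [← ppToGT_gtToPP hg, ← ppToGT_gtToPP hg', h]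

end ppgt

section finalassembly

open Finset

lemma topLam_mono (a b c : ℕ) : Monotone (topLam a b c) := by
  intro i j hij
  have h := (Fin.le_def).mp hij
  unfold topLam
  split_ifs <;> omega

lemma count_pp (a b c : ℕ) :
    ({M : Fin a → Fin b → ℕ | IsPlanePartition M c}.ncard) = GTcount (a+b) (topLam a b c) := by
  rw [pp_set_eq, Set.ncard_image_of_injOn gtToPP_injOn]
  have hset : GTSet (a+b) (topLam a b c) = ↑(GTFinset (a+b) (topLam a b c)) := by
    ext g
    rw [Finset.mem_coe, mem_GTFinset]
  rw [hset, Set.ncard_coe_finset, card_GTFinset]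

/-- shifted boundary values -/
def Lfun (b c : ℕ) : ℕ → ℕ := fun t => if t < b then t else c + t

lemma finprod_Ioi_eq (n : ℕ) (F : ℕ → ℕ → ℚ) :
    (∏ i : Fin n, ∏ j ∈ Finset.Ioi i, F (i:ℕ) (j:ℕ))
      = ∏ i ∈ range n, ∏ j ∈ Ico (i+1) n, F i j := by
  rw [← Fin.prod_univ_eq_prod_range (fun i => ∏ j ∈ Ico (i+1) n, F i j) n]
  apply Finset.prod_congr rfl
  intro i _
  apply Finset.prod_bij (fun (j : Fin n) (_ : j ∈ Finset.Ioi i) => (j : ℕ))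
  · intro j hj
    rw [Finset.mem_Ioi] at hj
    rw [Finset.mem_Ico]
    exact ⟨by exact_mod_cast hj, j.isLt⟩
  · intro x hx y hy h
    exact Fin.ext h
  · intro m hm
    rw [Finset.mem_Ico] at hm
    refine ⟨⟨m, hm.2⟩, ?_, rfl⟩
    rw [Finset.mem_Ioi]
    exact Fin.lt_def.mpr (by simpa using hm.1)
  · intro j hj
    rfl

lemma prod_range_add_one_q (m : ℕ) :
    ∏ k ∈ range m, ((k : ℚ) + 1) = (m.factorial : ℚ) := by
  induction m with
  | zero => simp
  | succ m ih => rw [prod_range_succ, ih, Nat.factorial_succ]; push_cast; ring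

lemma Fr_eq (n : ℕ) :
    (∏ i ∈ range n, ∏ j ∈ Ico (i+1) n, ((j:ℚ) - (i:ℚ)))
      = ∏ j ∈ range n, ((j.factorial : ℚ)) := by
  have inner : ∀ i ∈ range n, (∏ j ∈ Ico (i+1) n, ((j:ℚ) - (i:ℚ)))
      = (((n - 1 - i).factorial : ℚ)) := by
    intro i hi
    rw [Finset.prod_Ico_eq_prod_range, show n - (i+1) = n - 1 - i from by omega]
    rw [show (fun k : ℕ => ((i + 1 + k : ℕ) : ℚ) - (i:ℚ)) = fun k : ℕ => ((k : ℚ) + 1) from by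
      funext k; push_cast; ring]
    exact prod_range_add_one_q _
  rw [prod_congr rfl inner]
  exact Finset.prod_range_reflect (fun j => ((j.factorial : ℚ))) n

lemma tele (t : ℕ) (x : ℚ) (hx : 0 ≤ x) :
    ∏ k ∈ range t, (x + k + 2)/(x + k + 1) = (x + t + 1)/(x + 1) := by
  induction t with
  | zero => simp [div_self (show x + 1 ≠ 0 by positivity)]
  | succ t ih =>
    rw [prod_range_succ, ih]
    have h1 : x + t + 1 ≠ 0 := by positivity
    have h2 : x + 1 ≠ 0 := by positivity
    push_cast
    field_simp
    ring

lemma prod_shift (a m : ℕ) :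
    ∏ s ∈ range a, ((m:ℚ) + 1 + s) = ((m+a).factorial : ℚ) / (m.factorial : ℚ) := by
  induction a with
  | zero =>
    rw [range_zero, prod_empty, Nat.add_zero,
      div_self (Nat.cast_ne_zero.mpr (Nat.factorial_ne_zero m))]
  | succ a ih =>
    rw [prod_range_succ, ih, show m + (a+1) = (m + a) + 1 from by omega, Nat.factorial_succ]
    have h : ((m.factorial : ℚ)) ≠ 0 := Nat.cast_ne_zero.mpr (Nat.factorial_ne_zero m)
    field_simp
    push_cast
    ring

lemma factor_eq (a b k : ℕ) :
    ((Nat.choose (a+b+k) (a+k) : ℚ) * (Nat.choose (a+b+k) (b+k) : ℚ))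
      / ((Nat.choose (a+b+k) a : ℚ) * (Nat.choose (b+k) b : ℚ))
    = ∏ s ∈ range a, (((b+k : ℕ):ℚ) + 1 + s)/(((k:ℕ):ℚ) + 1 + s) := by
  rw [Finset.prod_div_distrib, prod_shift, prod_shift]
  rw [show b + k + a = a+b+k from by omega, show k + a = a + k from by omega]
  rw [Nat.cast_choose ℚ (show a+k ≤ a+b+k by omega),
    Nat.cast_choose ℚ (show b+k ≤ a+b+k by omega),
    Nat.cast_choose ℚ (show a ≤ a+b+k by omega),
    Nat.cast_choose ℚ (show b ≤ b+k by omega)]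
  rw [show a+b+k - (a+k) = b from by omega, show a+b+k - (b+k) = a from by omega,
    show a+b+k - a = b+k from by omega, show b+k-b = k from by omega]
  have h1 : ((a+b+k).factorial : ℚ) ≠ 0 := Nat.cast_ne_zero.mpr (Nat.factorial_ne_zero _)
  have h2 : ((a+k).factorial : ℚ) ≠ 0 := Nat.cast_ne_zero.mpr (Nat.factorial_ne_zero _)
  have h3 : ((b+k).factorial : ℚ) ≠ 0 := Nat.cast_ne_zero.mpr (Nat.factorial_ne_zero _)
  have h4 : ((a).factorial : ℚ) ≠ 0 := Nat.cast_ne_zero.mpr (Nat.factorial_ne_zero _)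
  have h5 : ((b).factorial : ℚ) ≠ 0 := Nat.cast_ne_zero.mpr (Nat.factorial_ne_zero _)
  have h6 : ((k).factorial : ℚ) ≠ 0 := Nat.cast_ne_zero.mpr (Nat.factorial_ne_zero _)
  field_simp

end finalassembly


/-- MacMahon's box formula for the number of a × b × c plane partitions. -/
theorem macmahon_box_formula (a b c : ℕ) :
    ({M : Fin a → Fin b → ℕ | IsPlanePartition M c}.ncard : ℚ) =
    ∏ i ∈ Finset.Icc 1 c,
      ((Nat.choose (a + b + i - 1) (a + i - 1) : ℚ) * (Nat.choose (a + b + i - 1) (b + i - 1))) /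
      ((Nat.choose (a + b + i - 1) a : ℚ) * (Nat.choose (b + i - 1) b)) := by
  classical
  rw [count_pp a b c, gtcount_eq_det _ _ (topLam_mono a b c)]
  have hL : (fun i : Fin (a+b) => topLam a b c i + (i:ℕ))
      = fun i : Fin (a+b) => Lfun b c (i:ℕ) := by
    funext i; unfold topLam Lfun; split_ifs <;> omega
  rw [hL]
  set n := a + b with hn
  -- determinant value
  have hdet := det_chooseMat n (fun i : Fin n => Lfun b c (i:ℕ))
  have hVfin : (∏ i : Fin n, ∏ j ∈ Finset.Ioi i,
        (((Lfun b c (j:ℕ) : ℕ) : ℚ) - ((Lfun b c (i:ℕ) : ℕ) : ℚ)))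
      = ∏ i ∈ range n, ∏ j ∈ Ico (i+1) n, (((Lfun b c j : ℕ) : ℚ) - ((Lfun b c i : ℕ) : ℚ)) :=
    finprod_Ioi_eq n (fun i j => ((Lfun b c j : ℚ) - (Lfun b c i : ℚ)))
  have hFfin : (∏ j : Fin n, (((j:ℕ).factorial : ℚ))) = ∏ j ∈ range n, ((j.factorial:ℚ)) :=
    Fin.prod_univ_eq_prod_range (fun j => ((j.factorial : ℚ))) n
  set Vr := ∏ i ∈ range n, ∏ j ∈ Ico (i+1) n, (((Lfun b c j : ℕ):ℚ) - ((Lfun b c i : ℕ):ℚ)) with hVr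
  set Fr := ∏ i ∈ range n, ∏ j ∈ Ico (i+1) n, ((j:ℚ) - (i:ℚ)) with hFr
  have hFrfact : Fr = ∏ j ∈ range n, ((j.factorial:ℚ)) := Fr_eq n
  have hFrne : Fr ≠ 0 := by
    rw [hFrfact]
    exact Finset.prod_ne_zero_iff.mpr (fun j _ => Nat.cast_ne_zero.mpr (Nat.factorial_ne_zero j))
  have hmain : Fr * (chooseMat n (fun i : Fin n => Lfun b c (i:ℕ))).det = Vr := by
    rw [hFrfact, ← hFfin, hdet]
    exact hVfin
  have hdetval : (chooseMat n (fun i : Fin n => Lfun b c (i:ℕ))).det = Vr / Fr := by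
    rw [eq_div_iff hFrne, mul_comm]
    exact hmain
  rw [hdetval]
  -- ratio form
  have hsplit : Vr / Fr = ∏ i ∈ range n, ∏ j ∈ Ico (i+1) n,
      ((((Lfun b c j : ℕ):ℚ) - ((Lfun b c i : ℕ):ℚ)) / ((j:ℚ) - (i:ℚ))) := by
    rw [hVr, hFr]
    symm
    simp only [Finset.prod_div_distrib]
  rw [hsplit]
  -- pointwise factor simplification
  have hfactor : ∀ i j : ℕ, i < j →
      ((((Lfun b c j : ℕ):ℚ) - ((Lfun b c i : ℕ):ℚ)) / ((j:ℚ) - (i:ℚ)))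
      = if i < b ∧ b ≤ j then (((c:ℚ) + j - i) / ((j:ℚ) - i)) else 1 := by
    intro i j hij
    have hne : ((j:ℚ)) - (i:ℚ) ≠ 0 := sub_ne_zero.mpr (by exact_mod_cast Nat.ne_of_gt hij)
    by_cases hib : i < b <;> by_cases hjb : j < b
    · rw [if_neg (by omega)]
      unfold Lfun
      rw [if_pos hib, if_pos hjb]
      exact div_self hne
    · rw [if_pos ⟨hib, by omega⟩]
      unfold Lfun
      rw [if_pos hib, if_neg hjb]
      push_cast
      ring_nf
    · omega
    · rw [if_neg (by omega)]
      unfold Lfun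
      rw [if_neg hib, if_neg hjb]
      rw [show ((c + j : ℕ) : ℚ) - ((c + i : ℕ) : ℚ) = (j:ℚ) - (i:ℚ) by push_cast; ring]
      exact div_self hne
  rw [Finset.prod_congr rfl (fun i hi => Finset.prod_congr rfl (fun j hj =>
    hfactor i j (by have := (Finset.mem_Ico.mp hj).1; omega)))]
  -- region splitting
  have hbn : b ≤ n := by omega
  have hsplit2 : (∏ i ∈ range n, ∏ j ∈ Ico (i+1) n,
        (if i < b ∧ b ≤ j then (((c:ℚ) + j - i) / ((j:ℚ) - i)) else 1))
      = ∏ i ∈ range b, ∏ j ∈ Ico b n, (((c:ℚ) + j - i) / ((j:ℚ) - i)) := by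
    rw [range_eq_Ico, ← Finset.prod_Ico_consecutive _ (Nat.zero_le b) hbn]
    have hright : (∏ i ∈ Ico b n, ∏ j ∈ Ico (i+1) n,
        (if i < b ∧ b ≤ j then (((c:ℚ) + j - i) / ((j:ℚ) - i)) else 1)) = 1 := by
      apply Finset.prod_eq_one
      intro i hi
      apply Finset.prod_eq_one
      intro j hj
      rw [if_neg (by rw [Finset.mem_Ico] at hi; omega)]
    rw [hright, mul_one, ← range_eq_Ico]
    apply Finset.prod_congr rfl
    intro i hi
    rw [Finset.mem_range] at hi
    rw [← Finset.prod_Ico_consecutive _ (by omega : i + 1 ≤ b) hbn]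
    have hleft : (∏ j ∈ Ico (i+1) b,
        (if i < b ∧ b ≤ j then (((c:ℚ) + j - i) / ((j:ℚ) - i)) else 1)) = 1 := by
      apply Finset.prod_eq_one
      intro j hj
      rw [if_neg (by rw [Finset.mem_Ico] at hj; omega)]
    rw [hleft, one_mul]
    apply Finset.prod_congr rfl
    intro j hj
    rw [Finset.mem_Ico] at hj
    rw [if_pos ⟨hi, hj.1⟩]
  rw [hsplit2]
  -- reindex j = b + k and reflect i
  have hreindex : (∏ i ∈ range b, ∏ j ∈ Ico b n, (((c:ℚ) + j - i) / ((j:ℚ) - i)))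
      = ∏ i ∈ range b, ∏ k ∈ range a, (((c:ℚ) + k + i + 1) / ((k:ℚ) + i + 1)) := by
    have step1 : ∀ i : ℕ, i < b → (∏ j ∈ Ico b n, (((c:ℚ) + j - i) / ((j:ℚ) - i)))
        = ∏ k ∈ range a, (((c:ℚ) + (b + k) - i) / (((b:ℚ) + k) - i)) := by
      intro i _
      rw [Finset.prod_Ico_eq_prod_range, show n - b = a from by omega]
      apply Finset.prod_congr rfl
      intro k _
      push_cast
      ring_nf
    rw [Finset.prod_congr rfl (fun i hi => step1 i (Finset.mem_range.mp hi))]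
    rw [← Finset.prod_range_reflect]
    apply Finset.prod_congr rfl
    intro i hi
    rw [Finset.mem_range] at hi
    apply Finset.prod_congr rfl
    intro k _
    have hcast : ((b - 1 - i : ℕ) : ℚ) = (b:ℚ) - 1 - i := by
      have h1 : i ≤ b - 1 := by omega
      push_cast [Nat.cast_sub h1, Nat.cast_sub (by omega : 1 ≤ b)]
      ring
    rw [hcast]
    congr 1 <;> ring
  rw [hreindex]
  -- both sides equal the triple product U
  set U := ∏ s ∈ range a, ∏ i ∈ range b, ∏ k ∈ range c,
      (((s:ℚ) + i + k + 2) / ((s:ℚ) + i + k + 1)) with hU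
  have hWU : (∏ i ∈ range b, ∏ k ∈ range a, (((c:ℚ) + k + i + 1) / ((k:ℚ) + i + 1))) = U := by
    rw [Finset.prod_comm, hU]
    apply Finset.prod_congr rfl
    intro k _
    apply Finset.prod_congr rfl
    intro i _
    have ht := tele c ((k:ℚ) + i) (by positivity)
    rw [show ((c:ℚ) + k + i + 1) = (k:ℚ) + i + c + 1 by ring, ← ht]
  rw [hWU]
  -- now the RHS
  have hRHS : (∏ i ∈ Finset.Icc 1 c,
      ((Nat.choose (a + b + i - 1) (a + i - 1) : ℚ) * (Nat.choose (a + b + i - 1) (b + i - 1))) /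
      ((Nat.choose (a + b + i - 1) a : ℚ) * (Nat.choose (b + i - 1) b))) = U := by
    rw [← Finset.Ico_add_one_right_eq_Icc 1 c, Finset.prod_Ico_eq_prod_range]
    rw [show c + 1 - 1 = c from rfl]
    have hstep : ∀ k : ℕ,
        ((Nat.choose (a + b + (1+k) - 1) (a + (1+k) - 1) : ℚ) * (Nat.choose (a + b + (1+k) - 1) (b + (1+k) - 1))) /
        ((Nat.choose (a + b + (1+k) - 1) a : ℚ) * (Nat.choose (b + (1+k) - 1) b))
        = ∏ s ∈ range a, (((b+k : ℕ):ℚ) + 1 + s)/(((k:ℕ):ℚ) + 1 + s) := by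
      intro k
      rw [show a + b + (1+k) - 1 = a+b+k from by omega, show a + (1+k) - 1 = a+k from by omega,
        show b + (1+k) - 1 = b+k from by omega]
      exact factor_eq a b k
    rw [Finset.prod_congr rfl (fun k _ => hstep k)]
    -- swap and telescope
    rw [Finset.prod_comm, hU]
    apply Finset.prod_congr rfl
    intro s _
    have hinner : ∀ k : ℕ, ((((b+k : ℕ):ℚ) + 1 + s)/(((k:ℕ):ℚ) + 1 + s))
        = ∏ i ∈ range b, (((s:ℚ) + k + i + 2) / ((s:ℚ) + k + i + 1)) := by
      intro k
      have ht := tele b ((s:ℚ) + k) (by positivity)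
      rw [ht]
      push_cast
      ring_nf
    rw [Finset.prod_congr rfl (fun k _ => hinner k), Finset.prod_comm]
    apply Finset.prod_congr rfl
    intro i _
    apply Finset.prod_congr rfl
    intro k _
    ring_nf
  exact hRHS.symm
end

section
/- For positive integers k ≤ m, the number of k × (m-k) nonnegative integer matrices of width at most 2 equals the Narayana number N(m+1, k+1) = (1/(m+1)) * C(m+1, k+1) * C(m+1, k). -/
open scoped BigOperators

namespace WTM


def mrec (a b : ℕ) (f : ℕ → ℕ → ℕ) (i j : ℕ) : ℕ :=
  if h : i < a ∧ j < b then
    f i j + max (mrec a b f (i+1) j) (mrec a b f i (j+1))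
  else 0
termination_by (a - i) + (b - j)
decreasing_by all_goals omega

lemma mrec_eq_zero (a b : ℕ) (f : ℕ → ℕ → ℕ) (i j : ℕ) (h : ¬(i < a ∧ j < b)) :
    mrec a b f i j = 0 := by
  rw [mrec]; exact dif_neg h

lemma mrec_eq (a b : ℕ) (f : ℕ → ℕ → ℕ) (i j : ℕ) (hi : i < a) (hj : j < b) :
    mrec a b f i j = f i j + max (mrec a b f (i+1) j) (mrec a b f i (j+1)) := by
  conv_lhs => rw [mrec]
  exact dif_pos ⟨hi, hj⟩

lemma mrec_succ_left_le (a b : ℕ) (f : ℕ → ℕ → ℕ) (i j : ℕ) :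
    mrec a b f (i+1) j ≤ mrec a b f i j := by
  by_cases h : i < a ∧ j < b
  · rw [mrec_eq a b f i j h.1 h.2]
    exact le_add_left (le_max_left _ _) |>.trans_eq rfl
  · rw [mrec_eq_zero a b f (i+1) j (by omega)]
    exact Nat.zero_le _

lemma mrec_succ_right_le (a b : ℕ) (f : ℕ → ℕ → ℕ) (i j : ℕ) :
    mrec a b f i (j+1) ≤ mrec a b f i j := by
  by_cases h : i < a ∧ j < b
  · rw [mrec_eq a b f i j h.1 h.2]
    exact le_add_left (le_max_right _ _)
  · rw [mrec_eq_zero a b f i (j+1) (by omega)]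
    exact Nat.zero_le _

lemma steps_antitone {M : ℕ → ℕ → ℕ}
    (h1 : ∀ i j, M (i+1) j ≤ M i j) (h2 : ∀ i j, M i (j+1) ≤ M i j)
    {i i' j j' : ℕ} (hi : i ≤ i') (hj : j ≤ j') : M i' j' ≤ M i j := by
  have key1 : ∀ d i j, M (i + d) j ≤ M i j := by
    intro d
    induction d with
    | zero => intro i j; rfl
    | succ d ih => intro i j; calc M (i + (d+1)) j = M ((i+d)+1) j := by ring_nf
                        _ ≤ M (i+d) j := h1 _ _
                        _ ≤ M i j := ih i j
  have key2 : ∀ d i j, M i (j + d) ≤ M i j := by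
    intro d
    induction d with
    | zero => intro i j; rfl
    | succ d ih => intro i j; calc M i (j + (d+1)) = M i ((j+d)+1) := by ring_nf
                        _ ≤ M i (j+d) := h2 _ _
                        _ ≤ M i j := ih i j
  calc M i' j' = M (i + (i' - i)) j' := by congr 1; omega
    _ ≤ M i j' := key1 _ _ _
    _ = M i (j + (j' - j)) := by congr 1; omega
    _ ≤ M i j := key2 _ _ _

lemma mrec_antitone (a b : ℕ) (f : ℕ → ℕ → ℕ) {i i' j j' : ℕ}
    (hi : i ≤ i') (hj : j ≤ j') : mrec a b f i' j' ≤ mrec a b f i j :=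
  steps_antitone (mrec_succ_left_le a b f) (mrec_succ_right_le a b f) hi hj

lemma mrec_unique (a b : ℕ) (f : ℕ → ℕ → ℕ) (N : ℕ → ℕ → ℕ)
    (h0 : ∀ i j, ¬(i < a ∧ j < b) → N i j = 0)
    (hrec : ∀ i j, i < a → j < b → N i j = f i j + max (N (i+1) j) (N i (j+1))) :
    ∀ i j, N i j = mrec a b f i j := by
  suffices h : ∀ n i j, a + b ≤ n + i + j → N i j = mrec a b f i j by
    intro i j; exact h (a+b) i j (by omega)
  intro n
  induction n with
  | zero =>
    intro i j hij
    rw [h0 i j (by omega), mrec_eq_zero a b f i j (by omega)]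
  | succ n ih =>
    intro i j hij
    by_cases h : i < a ∧ j < b
    · rw [hrec i j h.1 h.2, mrec_eq a b f i j h.1 h.2,
        ih (i+1) j (by omega), ih i (j+1) (by omega)]
    · rw [h0 i j h, mrec_eq_zero a b f i j h]




/-- extension of a Fin-matrix by zeros -/
def fext (a b : ℕ) (f : Fin a → Fin b → ℕ) (i j : ℕ) : ℕ :=
  if h : i < a ∧ j < b then f ⟨i, h.1⟩ ⟨j, h.2⟩ else 0

lemma fext_coe (a b : ℕ) (f : Fin a → Fin b → ℕ) (i : Fin a) (j : Fin b) :
    fext a b f i j = f i j := by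
  rw [fext, dif_pos ⟨i.isLt, j.isLt⟩]

/-- A maximal chain realizing `mrec` -/
lemma mrec_realized (a b : ℕ) (f : Fin a → Fin b → ℕ) (i j : ℕ) :
    ∃ D : Finset (Fin a × Fin b),
      (∀ p ∈ D, f p.1 p.2 ≠ 0) ∧
      (∀ p ∈ D, ∀ q ∈ D, (p.1 ≤ q.1 ∧ p.2 ≤ q.2) ∨ (q.1 ≤ p.1 ∧ q.2 ≤ p.2)) ∧
      (∀ p ∈ D, i ≤ (p.1 : ℕ) ∧ j ≤ (p.2 : ℕ)) ∧
      ∑ p ∈ D, f p.1 p.2 = mrec a b (fext a b f) i j := by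
  suffices h : ∀ n i j, a + b ≤ n + i + j →
      ∃ D : Finset (Fin a × Fin b),
      (∀ p ∈ D, f p.1 p.2 ≠ 0) ∧
      (∀ p ∈ D, ∀ q ∈ D, (p.1 ≤ q.1 ∧ p.2 ≤ q.2) ∨ (q.1 ≤ p.1 ∧ q.2 ≤ p.2)) ∧
      (∀ p ∈ D, i ≤ (p.1 : ℕ) ∧ j ≤ (p.2 : ℕ)) ∧
      ∑ p ∈ D, f p.1 p.2 = mrec a b (fext a b f) i j by
    exact h (a+b) i j (by omega)
  intro n
  induction n with
  | zero =>
    intro i j hij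
    refine ⟨∅, by simp, by simp, by simp, ?_⟩
    rw [Finset.sum_empty, mrec_eq_zero a b _ i j (by omega)]
  | succ n ih =>
    intro i j hij
    by_cases h : i < a ∧ j < b
    · obtain ⟨hi, hj⟩ := h
      -- pick the larger branch
      rcases le_total (mrec a b (fext a b f) i (j+1)) (mrec a b (fext a b f) (i+1) j) with hbr | hbr
      · -- max is mrec (i+1) j
        obtain ⟨D, hsupp, hchain, hpos, hsum⟩ := ih (i+1) j (by omega)
        have hmax : mrec a b (fext a b f) i j
            = fext a b f i j + mrec a b (fext a b f) (i+1) j := by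
          rw [mrec_eq a b _ i j hi hj, max_eq_left hbr]
        by_cases h0 : f ⟨i, hi⟩ ⟨j, hj⟩ = 0
        · refine ⟨D, hsupp, hchain, fun p hp => ⟨(hpos p hp).1.trans' (by omega), (hpos p hp).2⟩, ?_⟩
          rw [hsum, hmax, fext, dif_pos ⟨hi, hj⟩, h0, Nat.zero_add]
        · have hnotin : (⟨⟨i, hi⟩, ⟨j, hj⟩⟩ : Fin a × Fin b) ∉ D := by
            intro hmem
            have := (hpos _ hmem).1
            simp at this
          refine ⟨insert ⟨⟨i, hi⟩, ⟨j, hj⟩⟩ D, ?_, ?_, ?_, ?_⟩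
          · intro p hp
            rcases Finset.mem_insert.mp hp with rfl | hp
            · exact h0
            · exact hsupp p hp
          · intro p hp q hq
            rcases Finset.mem_insert.mp hp with rfl | hp <;>
              rcases Finset.mem_insert.mp hq with rfl | hq
            · left; exact ⟨le_refl _, le_refl _⟩
            · left
              refine ⟨?_, ?_⟩
              · have := (hpos q hq).1; exact Fin.mk_le_of_le_val (by omega)
              · have := (hpos q hq).2; exact Fin.mk_le_of_le_val (by omega)
            · right
              refine ⟨?_, ?_⟩
              · have := (hpos p hp).1; exact Fin.mk_le_of_le_val (by omega)
              · have := (hpos p hp).2; exact Fin.mk_le_of_le_val (by omega)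
            · exact hchain p hp q hq
          · intro p hp
            rcases Finset.mem_insert.mp hp with rfl | hp
            · simp
            · exact ⟨(hpos p hp).1.trans' (by omega), (hpos p hp).2⟩
          · rw [Finset.sum_insert hnotin, hsum, hmax, fext, dif_pos ⟨hi, hj⟩]
      · -- max is mrec i (j+1)
        obtain ⟨D, hsupp, hchain, hpos, hsum⟩ := ih i (j+1) (by omega)
        have hmax : mrec a b (fext a b f) i j
            = fext a b f i j + mrec a b (fext a b f) i (j+1) := by
          rw [mrec_eq a b _ i j hi hj, max_eq_right hbr]
        by_cases h0 : f ⟨i, hi⟩ ⟨j, hj⟩ = 0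
        · refine ⟨D, hsupp, hchain, fun p hp => ⟨(hpos p hp).1, (hpos p hp).2.trans' (by omega)⟩, ?_⟩
          rw [hsum, hmax, fext, dif_pos ⟨hi, hj⟩, h0, Nat.zero_add]
        · have hnotin : (⟨⟨i, hi⟩, ⟨j, hj⟩⟩ : Fin a × Fin b) ∉ D := by
            intro hmem
            have := (hpos _ hmem).2
            simp at this
          refine ⟨insert ⟨⟨i, hi⟩, ⟨j, hj⟩⟩ D, ?_, ?_, ?_, ?_⟩
          · intro p hp
            rcases Finset.mem_insert.mp hp with rfl | hp
            · exact h0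
            · exact hsupp p hp
          · intro p hp q hq
            rcases Finset.mem_insert.mp hp with rfl | hp <;>
              rcases Finset.mem_insert.mp hq with rfl | hq
            · left; exact ⟨le_refl _, le_refl _⟩
            · left
              refine ⟨?_, ?_⟩
              · have := (hpos q hq).1; exact Fin.mk_le_of_le_val (by omega)
              · have := (hpos q hq).2; exact Fin.mk_le_of_le_val (by omega)
            · right
              refine ⟨?_, ?_⟩
              · have := (hpos p hp).1; exact Fin.mk_le_of_le_val (by omega)
              · have := (hpos p hp).2; exact Fin.mk_le_of_le_val (by omega)
            · exact hchain p hp q hq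
          · intro p hp
            rcases Finset.mem_insert.mp hp with rfl | hp
            · simp
            · exact ⟨(hpos p hp).1, (hpos p hp).2.trans' (by omega)⟩
          · rw [Finset.sum_insert hnotin, hsum, hmax, fext, dif_pos ⟨hi, hj⟩]
    · refine ⟨∅, by simp, by simp, by simp, ?_⟩
      rw [Finset.sum_empty, mrec_eq_zero a b _ i j h]



lemma chain_min {a b : ℕ} (D : Finset (Fin a × Fin b))
    (hchain : ∀ p ∈ D, ∀ q ∈ D, (p.1 ≤ q.1 ∧ p.2 ≤ q.2) ∨ (q.1 ≤ p.1 ∧ q.2 ≤ p.2))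
    (hne : D.Nonempty) :
    ∃ p ∈ D, ∀ q ∈ D, (p.1 : ℕ) ≤ q.1 ∧ (p.2 : ℕ) ≤ q.2 := by
  obtain ⟨p, hp, hmin⟩ := Finset.exists_min_image D (fun p => (p.1 : ℕ) + (p.2 : ℕ)) hne
  refine ⟨p, hp, fun q hq => ?_⟩
  have hs := hmin q hq
  rcases hchain p hp q hq with ⟨h1, h2⟩ | ⟨h1, h2⟩
  · exact ⟨h1, h2⟩
  · have h1' : (q.1 : ℕ) ≤ p.1 := h1
    have h2' : (q.2 : ℕ) ≤ p.2 := h2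
    omega

lemma chain_sum_le {a b : ℕ} (M : ℕ → ℕ → ℕ)
    (h1 : ∀ i j, M (i+1) j ≤ M i j) (h2 : ∀ i j, M i (j+1) ≤ M i j) :
    ∀ n (D : Finset (Fin a × Fin b)), D.card ≤ n →
      (∀ p ∈ D, ∀ q ∈ D, (p.1 ≤ q.1 ∧ p.2 ≤ q.2) ∨ (q.1 ≤ p.1 ∧ q.2 ≤ p.2)) →
      ∀ i j : ℕ, (∀ p ∈ D, i ≤ (p.1 : ℕ) ∧ j ≤ (p.2 : ℕ)) →
      ∑ p ∈ D, (M p.1 p.2 - max (M (p.1+1) p.2) (M p.1 (p.2+1))) ≤ M i j := by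
  have hanti : ∀ {i i' j j' : ℕ}, i ≤ i' → j ≤ j' → M i' j' ≤ M i j := by
    intro i i' j j' hi hj
    exact steps_antitone h1 h2 hi hj
  intro n
  induction n with
  | zero =>
    intro D hcard _ i j _
    have : D = ∅ := Finset.card_eq_zero.mp (Nat.le_zero.mp hcard)
    simp [this]
  | succ n ih =>
    intro D hcard hchain i j hpos
    rcases D.eq_empty_or_nonempty with rfl | hne
    · simp
    obtain ⟨p₀, hp₀, hmin⟩ := chain_min D hchain hne
    have hsplit : D = insert p₀ (D.erase p₀) := by
      rw [Finset.insert_erase hp₀]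
    rw [hsplit, Finset.sum_insert (Finset.notMem_erase _ _)]
    have hble : M i j ≥ M p₀.1 p₀.2 := hanti (hpos p₀ hp₀).1 (hpos p₀ hp₀).2
    have hmaxle : max (M (p₀.1+1) p₀.2) (M p₀.1 (p₀.2+1)) ≤ M p₀.1 p₀.2 :=
      max_le (h1 _ _) (h2 _ _)
    rcases (D.erase p₀).eq_empty_or_nonempty with hemp | hne'
    · rw [hemp, Finset.sum_empty]
      omega
    · obtain ⟨q₀, hq₀, hmin'⟩ := chain_min (D.erase p₀)
        (fun p hp q hq => hchain p (Finset.mem_of_mem_erase hp) q (Finset.mem_of_mem_erase hq)) hne'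
    -- sum over erase ≤ M q₀
      have hsum' : ∑ p ∈ D.erase p₀, (M p.1 p.2 - max (M (p.1+1) p.2) (M p.1 (p.2+1)))
          ≤ M q₀.1 q₀.2 := by
        refine ih (D.erase p₀) ?_ (fun p hp q hq =>
          hchain p (Finset.mem_of_mem_erase hp) q (Finset.mem_of_mem_erase hq)) _ _ hmin'
        have := Finset.card_erase_of_mem hp₀
        omega
      -- q₀ strictly above p₀ in one coordinate
      have hq₀mem := Finset.mem_of_mem_erase hq₀
      have hne'' : q₀ ≠ p₀ := Finset.ne_of_mem_erase hq₀
      have hcmp := hmin q₀ hq₀mem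
      have hq : (p₀.1 : ℕ) + 1 ≤ q₀.1 ∨ (p₀.2 : ℕ) + 1 ≤ q₀.2 := by
        by_contra hcon
        push_neg at hcon
        apply hne''
        have : (q₀.1 : ℕ) = p₀.1 := by omega
        have : (q₀.2 : ℕ) = p₀.2 := by omega
        ext
        · omega
        · omega
      have hMq : M q₀.1 q₀.2 ≤ max (M (p₀.1+1) p₀.2) (M p₀.1 (p₀.2+1)) := by
        rcases hq with hq | hq
        · exact le_max_of_le_left (hanti hq hcmp.2)
        · exact le_max_of_le_right (hanti hcmp.1 hq)
      omega



section equivPP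

variable {a b : ℕ}

lemma fext_steps_left {M : Fin a → Fin b → ℕ} (h : IsPlanePartition M 2) (i j : ℕ) :
    fext a b M (i+1) j ≤ fext a b M i j := by
  rw [fext, fext]
  split_ifs with h1 h2 h2
  · exact h.2.2 _ ⟨i, by omega⟩ ⟨i+1, h1.1⟩ (by simp [Fin.le_def])
  · exact (h2 ⟨by omega, h1.2⟩).elim
  · exact Nat.zero_le _
  · exact Nat.zero_le _

lemma fext_steps_right {M : Fin a → Fin b → ℕ} (h : IsPlanePartition M 2) (i j : ℕ) :
    fext a b M i (j+1) ≤ fext a b M i j := by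
  rw [fext, fext]
  split_ifs with h1 h2 h2
  · exact h.2.1 _ ⟨j, by omega⟩ ⟨j+1, h1.2⟩ (by simp [Fin.le_def])
  · exact (h2 ⟨h1.1, by omega⟩).elim
  · exact Nat.zero_le _
  · exact Nat.zero_le _

lemma fext_le_two {M : Fin a → Fin b → ℕ} (h : IsPlanePartition M 2) (i j : ℕ) :
    fext a b M i j ≤ 2 := by
  rw [fext]; split_ifs with h1
  · exact h.1 _ _
  · exact Nat.zero_le _

/-- from a 2-bounded plane partition to a width ≤ 2 matrix -/
def toW (M : Fin a → Fin b → ℕ) : Fin a → Fin b → ℕ :=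
  fun i j => M i j - max (fext a b M ((i:ℕ)+1) j) (fext a b M i ((j:ℕ)+1))

lemma toW_width {M : Fin a → Fin b → ℕ} (h : IsPlanePartition M 2) :
    widthLE (toW M) 2 := by
  intro D _ hchain
  have key := chain_sum_le (a := a) (b := b) (fext a b M)
    (fext_steps_left h) (fext_steps_right h) D.card D le_rfl hchain 0 0
    (fun p _ => ⟨Nat.zero_le _, Nat.zero_le _⟩)
  calc ∑ p ∈ D, toW M p.1 p.2
      = ∑ p ∈ D, (fext a b M p.1 p.2
          - max (fext a b M ((p.1:ℕ)+1) p.2) (fext a b M p.1 ((p.2:ℕ)+1))) := by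
        refine Finset.sum_congr rfl fun p _ => ?_
        rw [toW, fext_coe]
    _ ≤ fext a b M 0 0 := key
    _ ≤ 2 := fext_le_two h 0 0

/-- from a width ≤ 2 matrix to a 2-bounded plane partition -/
def toP (f : Fin a → Fin b → ℕ) : Fin a → Fin b → ℕ :=
  fun i j => mrec a b (fext a b f) i j

lemma toP_pp {f : Fin a → Fin b → ℕ} (h : widthLE f 2) :
    IsPlanePartition (toP f) 2 := by
  refine ⟨?_, ?_, ?_⟩
  · intro i j
    obtain ⟨D, hsupp, hchain, _, hsum⟩ := mrec_realized a b f i j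
    rw [toP, ← hsum]
    exact h D hsupp hchain
  · intro i j j' hjj
    exact mrec_antitone a b _ le_rfl hjj
  · intro j i i' hii
    exact mrec_antitone a b _ hii le_rfl

lemma fext_toP (f : Fin a → Fin b → ℕ) (i j : ℕ) :
    fext a b (toP f) i j = mrec a b (fext a b f) i j := by
  rw [fext]
  split_ifs with h1
  · rfl
  · rw [mrec_eq_zero a b _ i j h1]

noncomputable def equivPP (a b : ℕ) :
    {M : Fin a → Fin b → ℕ // IsPlanePartition M 2} ≃ {f : Fin a → Fin b → ℕ // widthLE f 2} where
  toFun M := ⟨toW M.1, toW_width M.2⟩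
  invFun f := ⟨toP f.1, toP_pp f.2⟩
  left_inv := by
    rintro ⟨M, hM⟩
    have hunique : ∀ i j : ℕ, fext a b M i j = mrec a b (fext a b (toW M)) i j := by
      refine mrec_unique a b _ _ (fun i j hij => by rw [fext, dif_neg hij]) ?_
      intro i j hi hj
      have hstep : max (fext a b M (i+1) j) (fext a b M i (j+1)) ≤ fext a b M i j :=
        max_le (fext_steps_left hM i j) (fext_steps_right hM i j)
      have : fext a b (toW M) i j
          = fext a b M i j - max (fext a b M (i+1) j) (fext a b M i (j+1)) := by
        rw [fext, dif_pos ⟨hi, hj⟩, toW]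
        congr 1
        rw [fext, dif_pos ⟨hi, hj⟩]
      omega
    refine Subtype.ext (funext fun i => funext fun j => ?_)
    have := hunique i j
    rw [fext_coe] at this
    show mrec a b (fext a b (toW M)) i j = M i j
    rw [← this]
  right_inv := by
    rintro ⟨f, hf⟩
    refine Subtype.ext (funext fun i => funext fun j => ?_)
    have hi : (i : ℕ) < a := i.isLt
    have hj : (j : ℕ) < b := j.isLt
    have hrec := mrec_eq a b (fext a b f) i j hi hj
    have hfc : fext a b f i j = f i j := fext_coe a b f i j
    simp only [toW, toP, fext_toP]
    omega

lemma card_width_eq_card_pp (a b : ℕ) :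
    Nat.card {f : Fin a → Fin b → ℕ // widthLE f 2}
      = Nat.card {M : Fin a → Fin b → ℕ // IsPlanePartition M 2} :=
  Nat.card_congr (equivPP a b).symm

end equivPP



/-- pairs of antitone sequences of length `n`, `v ≤ u`, capped by `s` and `t`. -/
def QTy (n s t : ℕ) : Type :=
  {p : (Fin n → ℕ) × (Fin n → ℕ) //
    Antitone p.1 ∧ Antitone p.2 ∧ (∀ i, p.2 i ≤ p.1 i) ∧ (∀ i, p.1 i ≤ s) ∧ (∀ i, p.2 i ≤ t)}

instance QTy.finite (n s t : ℕ) : Finite (QTy n s t) := by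
  refine Finite.of_injective
    (fun p : QTy n s t =>
      ((fun i => (⟨p.1.1 i, Nat.lt_succ_of_le (p.2.2.2.2.1 i)⟩ : Fin (s+1))),
       (fun i => (⟨p.1.2 i, Nat.lt_succ_of_le (p.2.2.2.2.2 i)⟩ : Fin (t+1))))) ?_
  rintro ⟨⟨u, v⟩, h⟩ ⟨⟨u', v'⟩, h'⟩ heq
  simp only [Prod.mk.injEq] at heq
  refine Subtype.ext (Prod.ext ?_ ?_)
  · funext i
    exact congrArg Fin.val (congrFun heq.1 i)
  · funext i
    exact congrArg Fin.val (congrFun heq.2 i)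

noncomputable def Qc (n s t : ℕ) : ℕ := Nat.card (QTy n s t)

lemma threshold {b : ℕ} {r : Fin b → ℕ} (hr : Antitone r) (c : ℕ) (j : Fin b) :
    ((j:ℕ) < (Finset.univ.filter (fun j' => c ≤ r j')).card ↔ c ≤ r j) := by
  constructor
  · intro hlt
    by_contra hc'
    push_neg at hc'
    have hsub : (Finset.univ.filter (fun j' => c ≤ r j')) ⊆ Finset.Iio j := by
      intro x hx
      rw [Finset.mem_filter] at hx
      rw [Finset.mem_Iio]
      by_contra hxj
      push_neg at hxj
      exact absurd (le_trans hx.2 (hr hxj)) (by omega)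
    have := Finset.card_le_card hsub
    rw [Fin.card_Iio] at this
    omega
  · intro hle
    have hsub : Finset.Iic j ⊆ (Finset.univ.filter (fun j' => c ≤ r j')) := by
      intro x hx
      rw [Finset.mem_Iic] at hx
      rw [Finset.mem_filter]
      exact ⟨Finset.mem_univ _, le_trans hle (hr hx)⟩
    have := Finset.card_le_card hsub
    rw [Fin.card_Iic] at this
    omega

lemma countlt {b c : ℕ} (hc : c ≤ b) :
    ((Finset.univ.filter (fun j : Fin b => (j:ℕ) < c)).card) = c := by
  rcases Nat.lt_or_ge c b with hcb | hcb
  · have : (Finset.univ.filter (fun j : Fin b => (j:ℕ) < c)) = Finset.Iio ⟨c, hcb⟩ := by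
      ext x
      simp [Fin.lt_def]
    rw [this, Fin.card_Iio]
  · have hbc : c = b := le_antisymm hc hcb
    subst hbc
    have : (Finset.univ.filter (fun j : Fin c => (j:ℕ) < c)) = Finset.univ := by
      ext x
      simp [x.isLt]
    rw [this, Finset.card_univ, Fintype.card_fin]

noncomputable def equivQ (a b : ℕ) :
    {M : Fin a → Fin b → ℕ // IsPlanePartition M 2} ≃ QTy a b b where
  toFun M :=
    ⟨((fun i => (Finset.univ.filter (fun j => 1 ≤ M.1 i j)).card),
      (fun i => (Finset.univ.filter (fun j => 2 ≤ M.1 i j)).card)),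
     by
      obtain ⟨M, h⟩ := M
      refine ⟨?_, ?_, ?_, ?_, ?_⟩
      · intro i i' hii
        dsimp only
        exact Finset.card_le_card (fun j hj => by
          rw [Finset.mem_filter] at *
          exact ⟨hj.1, le_trans hj.2 (h.2.2 j i i' hii)⟩)
      · intro i i' hii
        dsimp only
        exact Finset.card_le_card (fun j hj => by
          rw [Finset.mem_filter] at *
          exact ⟨hj.1, le_trans hj.2 (h.2.2 j i i' hii)⟩)
      · intro i
        dsimp only
        exact Finset.card_le_card (fun j hj => by
          rw [Finset.mem_filter] at *
          exact ⟨hj.1, le_trans (by omega) hj.2⟩)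
      · intro i
        calc (Finset.univ.filter (fun j => 1 ≤ M i j)).card
            ≤ Finset.univ.card := Finset.card_filter_le _ _
          _ = b := by rw [Finset.card_univ, Fintype.card_fin]
      · intro i
        calc (Finset.univ.filter (fun j => 2 ≤ M i j)).card
            ≤ Finset.univ.card := Finset.card_filter_le _ _
          _ = b := by rw [Finset.card_univ, Fintype.card_fin]⟩
  invFun p :=
    ⟨(fun i j => if (j:ℕ) < p.1.2 i then 2 else if (j:ℕ) < p.1.1 i then 1 else 0),
     by
      obtain ⟨⟨u, v⟩, hu, hv, hvu, hub, hvb⟩ := p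
      refine ⟨?_, ?_, ?_⟩
      · intro i j
        dsimp only
        split_ifs <;> omega
      · intro i j j' hjj
        have hval : (j:ℕ) ≤ (j':ℕ) := hjj
        dsimp only
        split_ifs <;> omega
      · intro j i i' hii
        have h1 : v i' ≤ v i := hv hii
        have h2 : u i' ≤ u i := hu hii
        dsimp only
        split_ifs <;> omega⟩
  left_inv := by
    rintro ⟨M, h⟩
    refine Subtype.ext (funext fun i => funext fun j => ?_)
    have hrow : Antitone (M i) := fun j j' hjj => h.2.1 i j j' hjj
    have iff1 := threshold hrow 1 j
    have iff2 := threshold hrow 2 j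
    have hM2 : M i j ≤ 2 := h.1 i j
    dsimp only
    split_ifs <;> omega
  right_inv := by
    rintro ⟨⟨u, v⟩, hu, hv, hvu, hub, hvb⟩
    refine Subtype.ext (Prod.ext ?_ ?_)
    · funext i
      dsimp only
      have : (Finset.univ.filter
          (fun j : Fin b => 1 ≤ if (j:ℕ) < v i then 2 else if (j:ℕ) < u i then 1 else 0))
          = Finset.univ.filter (fun j : Fin b => (j:ℕ) < u i) := by
        ext x
        simp only [Finset.mem_filter, Finset.mem_univ, true_and]
        have hvu' : v i ≤ u i := hvu i
        split_ifs <;> omega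
      rw [this, countlt (hub i)]
    · funext i
      dsimp only
      have : (Finset.univ.filter
          (fun j : Fin b => 2 ≤ if (j:ℕ) < v i then 2 else if (j:ℕ) < u i then 1 else 0))
          = Finset.univ.filter (fun j : Fin b => (j:ℕ) < v i) := by
        ext x
        simp only [Finset.mem_filter, Finset.mem_univ, true_and]
        split_ifs <;> omega
      rw [this, countlt (hvb i)]

lemma card_pp_eq_Q (a b : ℕ) :
    Nat.card {M : Fin a → Fin b → ℕ // IsPlanePartition M 2} = Qc a b b :=
  Nat.card_congr (equivQ a b)



lemma natcard_sigma {ι : Type} [Fintype ι] (F : ι → Type) [∀ i, Finite (F i)] :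
    Nat.card (Σ i, F i) = ∑ i, Nat.card (F i) := by
  letI : ∀ i, Fintype (F i) := fun i => Fintype.ofFinite _
  simp [Nat.card_eq_fintype_card, Fintype.card_sigma]

lemma Qc_zero (s t : ℕ) : Qc 0 s t = 1 := by
  haveI hne : Nonempty (QTy 0 s t) :=
    ⟨⟨(fun i => i.elim0, fun i => i.elim0),
      fun i j _ => i.elim0, fun i j _ => i.elim0, fun i => i.elim0,
      fun i => i.elim0, fun i => i.elim0⟩⟩
  haveI hss : Subsingleton (QTy 0 s t) := by
    constructor
    rintro ⟨⟨u, v⟩, _⟩ ⟨⟨u', v'⟩, _⟩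
    refine Subtype.ext (Prod.ext ?_ ?_) <;> funext i <;> exact i.elim0
  exact Nat.card_unique

lemma tail_antitone {n : ℕ} {u : Fin (n+1) → ℕ} (hu : Antitone u) :
    Antitone (Fin.tail u) :=
  fun i j h => hu (Fin.succ_le_succ_iff.mpr h)

lemma cons_antitone {n : ℕ} {u : Fin n → ℕ} {x : ℕ}
    (hu : Antitone u) (hx : ∀ i, u i ≤ x) : Antitone (Fin.cons x u) := by
  intro i j hij
  induction j using Fin.cases with
  | zero =>
    have : i = 0 := le_antisymm hij (Fin.zero_le i)
    subst this
    exact le_rfl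
  | succ j' =>
    rw [Fin.cons_succ]
    induction i using Fin.cases with
    | zero => rw [Fin.cons_zero]; exact hx j'
    | succ i' =>
      rw [Fin.cons_succ]
      exact hu (by rwa [Fin.succ_le_succ_iff] at hij)

/-- head map -/
def headMap (n s t : ℕ) (p : QTy (n+1) s t) : Fin (s+1) × Fin (t+1) :=
  (⟨p.1.1 0, Nat.lt_succ_of_le (p.2.2.2.2.1 0)⟩, ⟨p.1.2 0, Nat.lt_succ_of_le (p.2.2.2.2.2 0)⟩)

noncomputable def fiberEquiv (n s t : ℕ) (c : Fin (s+1)) (d : Fin (t+1)) (hdc : (d:ℕ) ≤ (c:ℕ)) :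
    {x : QTy (n+1) s t // headMap n s t x = (c, d)} ≃ QTy n c d where
  toFun q :=
    ⟨(Fin.tail q.1.1.1, Fin.tail q.1.1.2), by
      obtain ⟨⟨⟨u, v⟩, hu, hv, hvu, hub, hvb⟩, hq⟩ := q
      have hq1 : u 0 = (c:ℕ) := congrArg Fin.val (congrArg Prod.fst hq)
      have hq2 : v 0 = (d:ℕ) := congrArg Fin.val (congrArg Prod.snd hq)
      refine ⟨tail_antitone hu, tail_antitone hv, fun i => hvu i.succ, ?_, ?_⟩
      · intro i
        calc Fin.tail u i = u i.succ := rfl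
          _ ≤ u 0 := hu (Fin.zero_le _)
          _ = (c:ℕ) := hq1
      · intro i
        calc Fin.tail v i = v i.succ := rfl
          _ ≤ v 0 := hv (Fin.zero_le _)
          _ = (d:ℕ) := hq2⟩
  invFun r :=
    ⟨⟨(Fin.cons (c:ℕ) r.1.1, Fin.cons (d:ℕ) r.1.2), by
      obtain ⟨⟨u, v⟩, hu, hv, hvu, hub, hvb⟩ := r
      simp only at hu hv hvu hub hvb ⊢
      refine ⟨cons_antitone hu hub, cons_antitone hv hvb, ?_, ?_, ?_⟩
      · intro i
        induction i using Fin.cases with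
        | zero => rw [Fin.cons_zero, Fin.cons_zero]; exact hdc
        | succ i' => rw [Fin.cons_succ, Fin.cons_succ]; exact hvu i'
      · intro i
        induction i using Fin.cases with
        | zero => rw [Fin.cons_zero]; omega
        | succ i' =>
          rw [Fin.cons_succ]
          have := hub i'
          omega
      · intro i
        induction i using Fin.cases with
        | zero => rw [Fin.cons_zero]; omega
        | succ i' =>
          rw [Fin.cons_succ]
          have := hvb i'
          omega⟩,
     by
      refine Prod.ext (Fin.ext ?_) (Fin.ext ?_) <;> simp [headMap]⟩
  left_inv := by
    rintro ⟨⟨⟨u, v⟩, h⟩, hq⟩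
    have hq1 : u 0 = (c:ℕ) := congrArg Fin.val (congrArg Prod.fst hq)
    have hq2 : v 0 = (d:ℕ) := congrArg Fin.val (congrArg Prod.snd hq)
    refine Subtype.ext (Subtype.ext (Prod.ext ?_ ?_))
    · show Fin.cons (c:ℕ) (Fin.tail u) = u
      rw [← hq1]
      exact Fin.cons_self_tail u
    · show Fin.cons (d:ℕ) (Fin.tail v) = v
      rw [← hq2]
      exact Fin.cons_self_tail v
  right_inv := by
    rintro ⟨⟨u, v⟩, h⟩
    refine Subtype.ext (Prod.ext ?_ ?_)
    · show Fin.tail ((Fin.cons ((c:ℕ)) u : Fin (n+1) → ℕ)) = u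
      exact Fin.tail_cons _ _
    · show Fin.tail ((Fin.cons ((d:ℕ)) v : Fin (n+1) → ℕ)) = v
      exact Fin.tail_cons _ _

lemma fiber_empty (n s t : ℕ) (c : Fin (s+1)) (d : Fin (t+1)) (hdc : ¬ (d:ℕ) ≤ (c:ℕ)) :
    IsEmpty {x : QTy (n+1) s t // headMap n s t x = (c, d)} := by
  constructor
  rintro ⟨⟨⟨u, v⟩, hu, hv, hvu, hub, hvb⟩, hq⟩
  have hq1 : u 0 = (c:ℕ) := congrArg Fin.val (congrArg Prod.fst hq)
  have hq2 : v 0 = (d:ℕ) := congrArg Fin.val (congrArg Prod.snd hq)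
  have hx : v 0 ≤ u 0 := hvu 0
  omega

lemma Qc_rec (n s t : ℕ) :
    Qc (n+1) s t
      = ∑ c ∈ Finset.range (s+1), ∑ d ∈ Finset.range (min t c + 1), Qc n c d := by
  have h1 : Qc (n+1) s t
      = ∑ y : Fin (s+1) × Fin (t+1),
          Nat.card {x : QTy (n+1) s t // headMap n s t x = y} := by
    rw [Qc, ← natcard_sigma]
    exact Nat.card_congr (Equiv.sigmaFiberEquiv (headMap n s t)).symm
  have h2 : ∀ y : Fin (s+1) × Fin (t+1),
      Nat.card {x : QTy (n+1) s t // headMap n s t x = y}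
        = if (y.2:ℕ) ≤ (y.1:ℕ) then Qc n y.1 y.2 else 0 := by
    intro y
    by_cases hdc : (y.2:ℕ) ≤ (y.1:ℕ)
    · rw [if_pos hdc, Qc]
      exact Nat.card_congr (fiberEquiv n s t y.1 y.2 hdc)
    · rw [if_neg hdc]
      haveI := fiber_empty n s t y.1 y.2 hdc
      exact Nat.card_of_isEmpty
  rw [h1]
  rw [Finset.sum_congr rfl (fun y _ => h2 y)]
  rw [Fintype.sum_prod_type]
  rw [← Fin.sum_univ_eq_sum_range
    (fun c => ∑ d ∈ Finset.range (min t c + 1), Qc n c d) (s+1)]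
  refine Finset.sum_congr rfl fun c _ => ?_
  simp only
  rw [Fin.sum_univ_eq_sum_range
    (fun d => if d ≤ (c:ℕ) then Qc n c d else 0) (t+1)]
  have hfil : Finset.filter (fun d => d ≤ (c:ℕ)) (Finset.range (t+1))
      = Finset.range (min t (c:ℕ) + 1) := by
    ext x
    simp only [Finset.mem_filter, Finset.mem_range]
    omega
  rw [← hfil, Finset.sum_filter]



lemma pasZ (n k : ℕ) : (((n+1)).choose (k+1) : ℤ) = (n.choose k : ℤ) + (n.choose (k+1) : ℤ) := by
  exact_mod_cast Nat.choose_succ_succ n k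

/-- Hockey stick, in ℤ. -/
lemma hockey (x y : ℕ) : ∀ T : ℕ,
    (∑ d ∈ Finset.range (T+1), ((d+x).choose y : ℤ))
      = ((T+x+1).choose (y+1) : ℤ) - (x.choose (y+1) : ℤ) := by
  intro T
  induction T with
  | zero =>
    simp only [Finset.range_one, Finset.sum_singleton, Nat.zero_add]
    rw [show x+1 = x+1 from rfl, pasZ x y]
    ring
  | succ T ih =>
    rw [Finset.sum_range_succ, ih, show T+1+x = (T+x+1) from by omega,
      show T+x+1+1 = (T+x+1)+1 from by omega, pasZ (T+x+1) y]
    ring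

/-- Diagonal sum identity. -/
lemma diagsum (a : ℕ) : ∀ t : ℕ,
    (∑ c ∈ Finset.range (t+1),
      (((c+a+1).choose (a+1) : ℤ) * ((c+a+2).choose (a+2) : ℤ)
        - ((c+a+1).choose a : ℤ) * ((c+a+2).choose (a+3) : ℤ)))
      = ((t+a+2).choose (a+2) : ℤ) * ((t+a+2).choose (a+2) : ℤ)
        - ((t+a+2).choose (a+1) : ℤ) * ((t+a+2).choose (a+3) : ℤ) := by
  intro t
  induction t with
  | zero =>
    simp only [Finset.range_one, Finset.sum_singleton, Nat.zero_add]
    rw [Nat.choose_self, Nat.choose_self, Nat.choose_eq_zero_of_lt (by omega : a+2 < a+3)]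
    push_cast
    ring
  | succ t ih =>
    rw [Finset.sum_range_succ, ih,
      show t+1+a+1 = t+a+2 from by omega, show t+1+a+2 = (t+a+2)+1 from by omega,
      show a+3 = (a+2)+1 from by omega, show a+2 = (a+1)+1 from by omega]
    simp only [pasZ]
    ring



lemma hockey1 (a T : ℕ) :
    (∑ d ∈ Finset.range (T+1), ((d+a+1).choose (a+1) : ℤ)) = ((T+a+2).choose (a+2) : ℤ) := by
  have h : ∑ d ∈ Finset.range (T+1), ((d+(a+1)).choose (a+1) : ℤ)
      = ((T+(a+1)+1).choose ((a+1)+1) : ℤ) - ((a+1).choose ((a+1)+1) : ℤ) := hockey (a+1) (a+1) T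
  rw [show T+(a+1)+1 = T+a+2 from by omega, show (a+1)+1 = a+2 from by omega,
    Nat.choose_succ_self] at h
  calc ∑ d ∈ Finset.range (T+1), ((d+a+1).choose (a+1) : ℤ)
      = ∑ d ∈ Finset.range (T+1), ((d+(a+1)).choose (a+1) : ℤ) := by
        refine Finset.sum_congr rfl fun d _ => by rw [show d+(a+1) = d+a+1 from by omega]
    _ = ((T+a+2).choose (a+2) : ℤ) := by rw [h]; push_cast; ring

lemma hockey2 (a T : ℕ) :
    (∑ d ∈ Finset.range (T+1), ((d+a+1).choose (a+2) : ℤ)) = ((T+a+2).choose (a+3) : ℤ) := by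
  have h : ∑ d ∈ Finset.range (T+1), ((d+(a+1)).choose (a+2) : ℤ)
      = ((T+(a+1)+1).choose ((a+2)+1) : ℤ) - ((a+1).choose ((a+2)+1) : ℤ) := hockey (a+1) (a+2) T
  rw [show T+(a+1)+1 = T+a+2 from by omega, show (a+2)+1 = a+3 from by omega,
    Nat.choose_eq_zero_of_lt (by omega : a+1 < a+3)] at h
  calc ∑ d ∈ Finset.range (T+1), ((d+a+1).choose (a+2) : ℤ)
      = ∑ d ∈ Finset.range (T+1), ((d+(a+1)).choose (a+2) : ℤ) := by
        refine Finset.sum_congr rfl fun d _ => by rw [show d+(a+1) = d+a+1 from by omega]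
    _ = ((T+a+2).choose (a+3) : ℤ) := by rw [h]; push_cast; ring

lemma outer (a t : ℕ) : ∀ s, t ≤ s →
    (∑ c ∈ Finset.range (s+1),
      (((c+a+1).choose (a+1) : ℤ) * ((min t c + a+2).choose (a+2) : ℤ)
        - ((c+a+1).choose a : ℤ) * ((min t c + a+2).choose (a+3) : ℤ)))
    = ((s+a+2).choose (a+2) : ℤ) * ((t+a+2).choose (a+2) : ℤ)
      - ((s+a+2).choose (a+1) : ℤ) * ((t+a+2).choose (a+3) : ℤ) := by
  refine Nat.le_induction ?_ ?_
  · calc ∑ c ∈ Finset.range (t+1),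
        (((c+a+1).choose (a+1) : ℤ) * ((min t c + a+2).choose (a+2) : ℤ)
          - ((c+a+1).choose a : ℤ) * ((min t c + a+2).choose (a+3) : ℤ))
        = ∑ c ∈ Finset.range (t+1),
          (((c+a+1).choose (a+1) : ℤ) * ((c+a+2).choose (a+2) : ℤ)
            - ((c+a+1).choose a : ℤ) * ((c+a+2).choose (a+3) : ℤ)) := by
          refine Finset.sum_congr rfl fun c hc => ?_
          rw [Finset.mem_range] at hc
          rw [min_eq_right (by omega : c ≤ t)]
      _ = _ := diagsum a t
  · intro s hs ih
    rw [Finset.sum_range_succ, ih, min_eq_left (by omega : t ≤ s+1),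
      show s+1+a+1 = s+a+2 from by omega, show s+1+a+2 = (s+a+2)+1 from by omega,
      show a+3 = (a+2)+1 from by omega, show a+2 = (a+1)+1 from by omega]
    simp only [pasZ]
    ring

lemma Qc_sum_min (s t : ℕ) : Qc 1 s t = ∑ c ∈ Finset.range (s+1), (min t c + 1) := by
  rw [Qc_rec]
  refine Finset.sum_congr rfl fun c _ => ?_
  simp [Qc_zero]

lemma Qc_one (t : ℕ) : ∀ s, t ≤ s →
    (Qc 1 s t : ℤ) = (s+1) * (t+1) - ((t+1).choose 2 : ℤ) := by
  have c2 : ((t+1).choose 2 : ℤ) * 2 = (t+1) * t := by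
    have hdvd : 2 ∣ (t+1) * t := by
      have := Nat.even_mul_succ_self t
      rw [Nat.mul_comm] at this
      exact this.two_dvd
    have hN : (t+1).choose 2 * 2 = (t+1) * t := by
      rw [Nat.choose_two_right, show t+1-1 = t from rfl]
      exact Nat.div_mul_cancel hdvd
    exact_mod_cast hN
  refine Nat.le_induction ?_ ?_
  · rw [Qc_sum_min]
    have he : ∑ c ∈ Finset.range (t+1), (min t c + 1) = ∑ c ∈ Finset.range (t+1), (c+1) := by
      refine Finset.sum_congr rfl fun c hc => ?_
      rw [Finset.mem_range] at hc
      rw [min_eq_right (by omega : c ≤ t)]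
    rw [he]
    have hh : (∑ c ∈ Finset.range (t+1), ((c+1:ℕ) : ℤ)) = ((t+2).choose 2 : ℤ) := by
      have h := hockey 1 1 t
      simp only [Nat.choose_one_right] at h
      rw [show t+1+1 = t+2 from by omega] at h
      rw [show ((1:ℕ).choose 2) = 0 from by decide] at h
      push_cast at h ⊢
      linarith
    have hcast : ((∑ c ∈ Finset.range (t+1), (c+1) : ℕ) : ℤ)
        = ∑ c ∈ Finset.range (t+1), ((c+1:ℕ) : ℤ) := by push_cast; ring
    rw [hcast, hh, show t+2 = (t+1)+1 from by omega, pasZ (t+1) 1]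
    rw [Nat.choose_one_right]
    push_cast
    linarith
  · intro s hs ih
    rw [Qc_sum_min] at ih ⊢
    rw [Finset.sum_range_succ, min_eq_left (by omega : t ≤ s+1)]
    push_cast at ih ⊢
    linarith

lemma Qc_formula : ∀ a s t : ℕ, t ≤ s →
    (Qc (a+1) s t : ℤ)
      = ((s+a+1).choose (a+1) : ℤ) * ((t+a+1).choose (a+1) : ℤ)
        - ((s+a+1).choose a : ℤ) * ((t+a+1).choose (a+2) : ℤ) := by
  intro a
  induction a with
  | zero =>
    intro s t hts
    rw [Qc_one t s hts]
    norm_num [Nat.choose_one_right]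
  | succ a ih =>
    intro s t hts
    have hrec := Qc_rec (a+1) s t
    have hcast : (Qc (a+2) s t : ℤ)
        = ∑ c ∈ Finset.range (s+1), ∑ d ∈ Finset.range (min t c + 1), (Qc (a+1) c d : ℤ) := by
      rw [show a+2 = (a+1)+1 from by omega, hrec]
      push_cast
      rfl
    have hinner : ∀ c, (∑ d ∈ Finset.range (min t c + 1), (Qc (a+1) c d : ℤ))
        = ((c+a+1).choose (a+1) : ℤ) * ((min t c + a+2).choose (a+2) : ℤ)
          - ((c+a+1).choose a : ℤ) * ((min t c + a+2).choose (a+3) : ℤ) := by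
      intro c
      have hst : ∀ d ∈ Finset.range (min t c + 1), (Qc (a+1) c d : ℤ)
          = ((c+a+1).choose (a+1) : ℤ) * ((d+a+1).choose (a+1) : ℤ)
            - ((c+a+1).choose a : ℤ) * ((d+a+1).choose (a+2) : ℤ) := by
        intro d hd
        rw [Finset.mem_range] at hd
        exact ih c d (by omega)
      rw [Finset.sum_congr rfl hst, Finset.sum_sub_distrib, ← Finset.mul_sum, ← Finset.mul_sum,
        hockey1 a (min t c), hockey2 a (min t c)]
    rw [show a+2 = (a+1)+1 from by omega] at hcast
    rw [hcast, Finset.sum_congr rfl fun c _ => hinner c, outer a t s hts]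
    rw [show s+(a+1)+1 = s+a+2 from by omega, show t+(a+1)+1 = t+a+2 from by omega,
      show (a+1)+1 = a+2 from by omega, show (a+1)+2 = a+3 from by omega]



lemma narayana_alg (a m : ℕ) (h : a+1 ≤ m) :
    ((m.choose (a+1) : ℚ) * (m.choose (a+1) : ℚ) - (m.choose a : ℚ) * (m.choose (a+2) : ℚ))
      = 1/((m:ℚ)+1) * (((m+1).choose (a+2) : ℚ)) * (((m+1).choose (a+1) : ℚ)) := by
  have x0 : ((m:ℚ)+1) ≠ 0 := by positivity
  have e1 : ((m:ℚ)+1) * (m.choose (a+1) : ℚ) = ((m+1).choose (a+2) : ℚ) * ((a:ℚ)+2) := by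
    have := Nat.add_one_mul_choose_eq m (a+1)
    have h2 : (m+1) * m.choose (a+1) = (m+1).choose (a+2) * (a+2) := by
      simpa [Nat.succ_eq_add_one] using this
    exact_mod_cast h2
  have e2 : ((m:ℚ)+1) * (m.choose a : ℚ) = ((m+1).choose (a+1) : ℚ) * ((a:ℚ)+1) := by
    have := Nat.add_one_mul_choose_eq m a
    have h2 : (m+1) * m.choose a = (m+1).choose (a+1) * (a+1) := by
      simpa [Nat.succ_eq_add_one] using this
    exact_mod_cast h2
  have e3 : ((m+1).choose (a+2) : ℚ) * ((a:ℚ)+2) = ((m+1).choose (a+1) : ℚ) * ((m:ℚ) - a) := by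
    have := Nat.choose_succ_right_eq (m+1) (a+1)
    -- (m+1).choose (a+2) * (a+2) = (m+1).choose (a+1) * (m+1 - (a+1))
    have h2 : (m+1).choose (a+2) * (a+2) = (m+1).choose (a+1) * (m - a) := by
      rw [show m+1-(a+1) = m - a from by omega] at this
      exact this
    have h3 : ((m+1).choose (a+2) * (a+2) : ℚ) = ((m+1).choose (a+1) : ℚ) * ((m - a : ℕ) : ℚ) := by
      exact_mod_cast h2
    rw [h3, Nat.cast_sub (by omega : a ≤ m)]
  have e4 : ((m:ℚ)+1) * (m.choose (a+2) : ℚ) = ((m+1).choose (a+2) : ℚ) * ((m:ℚ) - a - 1) := by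
    have h1 : (m+1) * m.choose (a+2) = (m+1).choose (a+3) * (a+3) := by
      simpa [Nat.succ_eq_add_one] using Nat.add_one_mul_choose_eq m (a+2)
    have h2 : (m+1).choose (a+3) * (a+3) = (m+1).choose (a+2) * (m - a - 1) := by
      have := Nat.choose_succ_right_eq (m+1) (a+2)
      rw [show (a+2)+1 = a+3 from by omega, show m+1-(a+2) = m - a - 1 from by omega] at this
      exact this
    have h4 : ((m+1) * m.choose (a+2) : ℚ) = ((m+1).choose (a+2) : ℚ) * ((m - a - 1 : ℕ) : ℚ) := by
      exact_mod_cast h1.trans h2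
    rw [Nat.cast_sub (by omega : 1 ≤ m - a), Nat.cast_sub (by omega : a ≤ m)] at h4
    exact_mod_cast h4
  set A := (m.choose (a+1) : ℚ)
  set B := (m.choose a : ℚ)
  set C' := (m.choose (a+2) : ℚ)
  set P := ((m+1).choose (a+2) : ℚ)
  set R := ((m+1).choose (a+1) : ℚ)
  set x := (m:ℚ)+1 with hx
  have key2 : x * (x * (A * A - B * C')) = x * (P * R) := by
    linear_combination (x*A + P*((a:ℚ)+2)) * e1 + (P*((a:ℚ)+2)) * e3
      - (x*C') * e2 - (R*((a:ℚ)+1)) * e4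
  have key3 : x * (A * A - B * C') = P * R := mul_left_cancel₀ x0 key2
  rw [div_mul_eq_mul_div, div_mul_eq_mul_div, eq_div_iff x0]
  linear_combination key3

end WTM

/-- the number of k × (m-k) nonnegative integer matrices of width at most 2
equals the Narayana number N(m+1, k+1). -/
theorem width_two_matrices_narayana (m k : ℕ) (hk : 0 < k) (hkm : k ≤ m) :
    ({M : Fin k → Fin (m - k) → ℕ | widthLE M 2}.ncard : ℚ) =
    (1 / (m + 1 : ℚ)) * (Nat.choose (m + 1) (k + 1)) * (Nat.choose (m + 1) k) := by
  obtain ⟨a, rfl⟩ : ∃ a, k = a+1 := ⟨k-1, by omega⟩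
  set b := m - (a+1) with hb
  have h1 : ({M : Fin (a+1) → Fin b → ℕ | widthLE M 2}.ncard) = WTM.Qc (a+1) b b := by
    rw [← Nat.card_coe_set_eq]
    have e0 : Nat.card ({M : Fin (a+1) → Fin b → ℕ | widthLE M 2} : Set _)
        = Nat.card {f : Fin (a+1) → Fin b → ℕ // widthLE f 2} := rfl
    rw [e0, WTM.card_width_eq_card_pp, WTM.card_pp_eq_Q]
  have h2 : (WTM.Qc (a+1) b b : ℤ)
      = (m.choose (a+1) : ℤ) * (m.choose (a+1) : ℤ)
        - (m.choose a : ℤ) * (m.choose (a+2) : ℤ) := by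
    rw [WTM.Qc_formula a b b le_rfl, show b+a+1 = m from by omega]
  have h3 : (({M : Fin (a+1) → Fin b → ℕ | widthLE M 2}.ncard : ℕ) : ℚ)
      = (m.choose (a+1) : ℚ) * (m.choose (a+1) : ℚ)
        - (m.choose a : ℚ) * (m.choose (a+2) : ℚ) := by
    rw [h1]
    have hq := congrArg (fun z : ℤ => (z : ℚ)) h2
    push_cast at hq ⊢
    exact hq
  rw [h3, WTM.narayana_alg a m (by omega)]
end

section
/- There is a bijection between the set of a × b nonnegative integer matrices of width at most 2 and the set of a × b matrices with entries in {0,1,2} that are weakly decreasing along rows and columns (i.e., a × b × 2 plane partitions). -/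
open scoped BigOperators

namespace W2PP

variable {a b : ℕ}

/-- generator condition for the level-2 down-set -/
def gen2 (N : Fin a × Fin b → ℕ) (q : Fin a × Fin b) : Prop :=
  N q = 2 ∨ (N q ≠ 0 ∧ ∃ r, q < r ∧ N r ≠ 0)

lemma gen2_ne_zero {N : Fin a × Fin b → ℕ} {q} (h : gen2 N q) : N q ≠ 0 := by
  rcases h with h | h
  · omega
  · exact h.1

open Classical in
noncomputable def fw (N : Fin a × Fin b → ℕ) (p : Fin a × Fin b) : ℕ :=
  (if ∃ q, p ≤ q ∧ N q ≠ 0 then 1 else 0) +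
  (if ∃ q, p ≤ q ∧ gen2 N q then 1 else 0)

def A1 (B : Fin a × Fin b → ℕ) (p : Fin a × Fin b) : Prop :=
  1 ≤ B p ∧ ∀ q, p < q → B q = 0

def A2 (B : Fin a × Fin b → ℕ) (p : Fin a × Fin b) : Prop :=
  2 ≤ B p ∧ ∀ q, p < q → B q ≤ 1

open Classical in
noncomputable def gw (B : Fin a × Fin b → ℕ) (p : Fin a × Fin b) : ℕ :=
  (if A1 B p then 1 else 0) + (if A2 B p then 1 else 0)

lemma exists_max (S : Fin a × Fin b → Prop) {p} (hp : S p) :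
    ∃ m, p ≤ m ∧ S m ∧ ∀ q, m < q → ¬ S q := by
  obtain ⟨m, hpm, hmax⟩ := Finite.exists_le_maximal hp
  exact ⟨m, hpm, hmax.1, fun q hq hSq => absurd (hmax.2 hSq hq.le) (not_le_of_gt hq)⟩

lemma fw_le_two (N : Fin a × Fin b → ℕ) (p) : fw N p ≤ 2 := by
  unfold fw; split_ifs <;> omega

lemma fw_mono (N : Fin a × Fin b → ℕ) {p q} (h : p ≤ q) : fw N q ≤ fw N p := by
  have key : ∀ S : Fin a × Fin b → Prop,
      (∃ r, q ≤ r ∧ S r) → (∃ r, p ≤ r ∧ S r) := by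
    rintro S ⟨r, h1, h2⟩; exact ⟨r, h.trans h1, h2⟩
  unfold fw
  apply Nat.add_le_add <;>
    · split_ifs with h1 h2 h3
      · omega
      · exact absurd (key _ h1) h2
      · omega
      · omega

lemma gw_width (B : Fin a × Fin b → ℕ) : widthLE (fun i j => gw B (i, j)) 2 := by
  classical
  intro D _ hc
  have hcomp : ∀ p ∈ D, ∀ q ∈ D, p ≤ q ∨ q ≤ p := by
    intro p hp q hq
    rcases hc p hp q hq with h | h
    · exact Or.inl (Prod.le_def.mpr h)
    · exact Or.inr (Prod.le_def.mpr h)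
  have key : ∀ (A : Fin a × Fin b → Prop) [DecidablePred A],
      (∀ p q, p < q → A p → A q → False) →
      (∑ p ∈ D, (if A p then 1 else 0)) ≤ 1 := by
    intro A _ hA
    rw [Finset.sum_boole]
    rw [Nat.cast_id]
    apply Finset.card_le_one.mpr
    intro x hx y hy
    simp only [Finset.mem_filter] at hx hy
    rcases hcomp x hx.1 y hy.1 with h | h
    · rcases eq_or_lt_of_le h with h | h
      · exact h
      · exact absurd (hA _ _ h hx.2 hy.2) not_false
    · rcases eq_or_lt_of_le h with h | h
      · exact h.symm
      · exact absurd (hA _ _ h hy.2 hx.2) not_false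
  have e : (∑ p ∈ D, (fun i j => gw B (i, j)) p.1 p.2)
      = (∑ p ∈ D, (if A1 B p then 1 else 0)) + (∑ p ∈ D, (if A2 B p then 1 else 0)) := by
    rw [← Finset.sum_add_distrib]
    apply Finset.sum_congr rfl
    intro p _
    simp only [gw]
  rw [e]
  have h1 : ∀ p q : Fin a × Fin b, p < q → A1 B p → A1 B q → False := by
    intro p q h hp hq
    have := hp.2 q h
    have := hq.1
    omega
  have h2 : ∀ p q : Fin a × Fin b, p < q → A2 B p → A2 B q → False := by
    intro p q h hp hq
    have := hp.2 q h
    have := hq.1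
    omega
  have := key (A1 B) h1
  have := key (A2 B) h2
  omega

def I1 (N : Fin a × Fin b → ℕ) (p : Fin a × Fin b) : Prop := ∃ q, p ≤ q ∧ N q ≠ 0
def I2 (N : Fin a × Fin b → ℕ) (p : Fin a × Fin b) : Prop := ∃ q, p ≤ q ∧ gen2 N q

lemma I2_I1 {N : Fin a × Fin b → ℕ} {p} (h : I2 N p) : I1 N p := by
  obtain ⟨q, h1, h2⟩ := h; exact ⟨q, h1, gen2_ne_zero h2⟩

lemma fw_pos_iff {N : Fin a × Fin b → ℕ} {p} : 1 ≤ fw N p ↔ I1 N p := by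
  unfold fw I1
  split_ifs with h1 h2 h3
  · exact iff_of_true (by omega) h1
  · exact iff_of_true (by omega) h1
  · exact iff_of_true (by omega) (I2_I1 h3)
  · exact iff_of_false (by omega) h1

lemma fw_zero_iff {N : Fin a × Fin b → ℕ} {p} : fw N p = 0 ↔ ¬ I1 N p := by
  rw [← not_iff_not, not_not, ← fw_pos_iff]; omega

lemma fw_two_iff {N : Fin a × Fin b → ℕ} {p} : 2 ≤ fw N p ↔ I2 N p := by
  unfold fw I2
  split_ifs with h1 h2 h3
  · exact iff_of_true (by omega) h2
  · exact iff_of_false (by omega) h2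
  · exact absurd (I2_I1 h3) h1
  · exact iff_of_false (by omega) h3

lemma fw_le_one_iff {N : Fin a × Fin b → ℕ} {p} : fw N p ≤ 1 ↔ ¬ I2 N p := by
  rw [← not_iff_not, not_not, ← fw_two_iff]; omega

lemma max_down (S : Fin a × Fin b → Prop) (p) :
    ((∃ q, p ≤ q ∧ S q) ∧ ∀ q, p < q → ¬ ∃ r, q ≤ r ∧ S r) ↔
      (S p ∧ ∀ q, p < q → ¬ S q) := by
  constructor
  · rintro ⟨⟨q, hpq, hS⟩, hmax⟩
    have hpeq : p = q := by
      by_contra hne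
      exact hmax q (lt_of_le_of_ne hpq hne) ⟨q, le_rfl, hS⟩
    subst hpeq
    exact ⟨hS, fun r hr hSr => hmax r hr ⟨r, le_rfl, hSr⟩⟩
  · rintro ⟨hS, hmax⟩
    exact ⟨⟨p, le_rfl, hS⟩, fun q hq h => by
      obtain ⟨r, hqr, hSr⟩ := h
      exact hmax r (lt_of_lt_of_le hq hqr) hSr⟩


section WidthFacts

variable {M : Fin a → Fin b → ℕ}

lemma w_single (hM : widthLE M 2) (p : Fin a × Fin b) : M p.1 p.2 ≤ 2 := by
  by_cases h : M p.1 p.2 = 0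
  · omega
  · have := hM {p} (by simpa using h)
      (by
        intro x hx y hy
        simp only [Finset.mem_singleton] at hx hy
        subst hx; subst hy
        exact Or.inl ⟨le_rfl, le_rfl⟩)
    simpa using this

lemma w_pair (hM : widthLE M 2) {p q : Fin a × Fin b} (hpq : p < q)
    (hp : M p.1 p.2 ≠ 0) (hq : M q.1 q.2 ≠ 0) : M p.1 p.2 + M q.1 q.2 ≤ 2 := by
  have hle := Prod.le_def.mp hpq.le
  have hne : p ≠ q := ne_of_lt hpq
  have := hM {p, q}
    (by
      intro x hx
      simp only [Finset.mem_insert, Finset.mem_singleton] at hx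
      rcases hx with rfl | rfl
      · exact hp
      · exact hq)
    (by
      intro x hx y hy
      simp only [Finset.mem_insert, Finset.mem_singleton] at hx hy
      rcases hx with rfl | rfl <;> rcases hy with rfl | rfl
      · exact Or.inl ⟨le_rfl, le_rfl⟩
      · exact Or.inl hle
      · exact Or.inr hle
      · exact Or.inl ⟨le_rfl, le_rfl⟩)
  rwa [Finset.sum_pair hne] at this

lemma w_triple (hM : widthLE M 2) {p q r : Fin a × Fin b} (hpq : p < q) (hqr : q < r)
    (hp : M p.1 p.2 ≠ 0) (hq : M q.1 q.2 ≠ 0) (hr : M r.1 r.2 ≠ 0) : False := by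
  have hpr : p < r := lt_trans hpq hqr
  have h1 := Prod.le_def.mp hpq.le
  have h2 := Prod.le_def.mp hqr.le
  have h3 := Prod.le_def.mp hpr.le
  have hne1 : p ≠ q := ne_of_lt hpq
  have hne2 : q ≠ r := ne_of_lt hqr
  have hne3 : p ≠ r := ne_of_lt hpr
  have hmem : ∀ x ∈ ({p, q, r} : Finset (Fin a × Fin b)), x = p ∨ x = q ∨ x = r := by
    intro x hx; simpa using hx
  have hsum := hM {p, q, r}
    (by
      intro x hx
      rcases hmem x hx with rfl | rfl | rfl
      · exact hp
      · exact hq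
      · exact hr)
    (by
      intro x hx y hy
      rcases hmem x hx with rfl | rfl | rfl <;> rcases hmem y hy with rfl | rfl | rfl <;>
        first
          | exact Or.inl ⟨le_rfl, le_rfl⟩
          | exact Or.inl h1
          | exact Or.inl h2
          | exact Or.inl h3
          | exact Or.inr h1
          | exact Or.inr h2
          | exact Or.inr h3)
  rw [Finset.sum_insert (by simp [hne1, hne3]),
    Finset.sum_insert (by simp [hne2]), Finset.sum_singleton] at hsum
  omega

end WidthFacts

lemma gw_fw (M : Fin a → Fin b → ℕ) (hM : widthLE M 2) (p : Fin a × Fin b) :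
    gw (fw (fun q : Fin a × Fin b => M q.1 q.2)) p = M p.1 p.2 := by
  suffices h : gw (fw (fun q : Fin a × Fin b => M q.1 q.2)) p
      = (fun q : Fin a × Fin b => M q.1 q.2) p from h
  set N : Fin a × Fin b → ℕ := fun q => M q.1 q.2 with hN
  have e1 : A1 (fw N) p ↔ ((fun q => N q ≠ 0) p ∧ ∀ q, p < q → ¬ (fun q => N q ≠ 0) q) := by
    refine Iff.trans ?_ (max_down (fun q => N q ≠ 0) p)
    unfold A1
    constructor
    · rintro ⟨ha, hb⟩
      exact ⟨fw_pos_iff.mp ha, fun q hq => fw_zero_iff.mp (hb q hq)⟩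
    · rintro ⟨ha, hb⟩
      exact ⟨fw_pos_iff.mpr ha, fun q hq => fw_zero_iff.mpr (hb q hq)⟩
  have e2 : A2 (fw N) p ↔ (gen2 N p ∧ ∀ q, p < q → ¬ gen2 N q) := by
    refine Iff.trans ?_ (max_down (gen2 N) p)
    unfold A2
    constructor
    · rintro ⟨ha, hb⟩
      exact ⟨fw_two_iff.mp ha, fun q hq => fw_le_one_iff.mp (hb q hq)⟩
    · rintro ⟨ha, hb⟩
      exact ⟨fw_two_iff.mpr ha, fun q hq => fw_le_one_iff.mpr (hb q hq)⟩
  simp only at e1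
  have hb : N p ≤ 2 := w_single hM p
  unfold gw
  by_cases h0 : N p = 0
  · rw [if_neg, if_neg]
    · omega
    · rw [e2]
      rintro ⟨hg, -⟩
      exact gen2_ne_zero hg h0
    · rw [e1]
      rintro ⟨hg, -⟩
      exact hg h0
  · by_cases h2 : N p = 2
    · have hmax : ∀ q, p < q → N q = 0 := by
        intro q hq
        by_contra hq0
        have hw : N p + N q ≤ 2 := w_pair hM hq h0 hq0
        omega
      rw [if_pos, if_pos]
      · omega
      · rw [e2]
        exact ⟨Or.inl h2, fun q hq hg => gen2_ne_zero hg (hmax q hq)⟩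
      · rw [e1]
        exact ⟨h0, fun q hq h => h (hmax q hq)⟩
    · have h1 : N p = 1 := by omega
      by_cases hup : ∃ r, p < r ∧ N r ≠ 0
      · rw [if_neg, if_pos]
        · omega
        · rw [e2]
          refine ⟨Or.inr ⟨h0, hup⟩, ?_⟩
          rintro q hq (hq2 | ⟨hq0, s, hqs, hs⟩)
          · have hq0 : N q ≠ 0 := by omega
            have hw : N p + N q ≤ 2 := w_pair hM hq h0 hq0
            omega
          · exact w_triple hM hq hqs h0 hq0 hs
        · rw [e1]
          rintro ⟨-, hmax⟩
          obtain ⟨r, hr1, hr2⟩ := hup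
          exact hmax r hr1 hr2
      · rw [if_pos, if_neg]
        · omega
        · rw [e2]
          rintro ⟨hg | ⟨-, hex⟩, -⟩
          · exact h2 hg
          · exact hup hex
        · rw [e1]
          exact ⟨h0, fun q hq hq0 => hup ⟨q, hq, hq0⟩⟩

lemma gw_ne_zero_iff {B : Fin a × Fin b → ℕ} {p} : gw B p ≠ 0 ↔ (A1 B p ∨ A2 B p) := by
  unfold gw
  split_ifs with u v w
  · exact iff_of_true (by omega) (Or.inl u)
  · exact iff_of_true (by omega) (Or.inl u)
  · exact iff_of_true (by omega) (Or.inr w)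
  · exact iff_of_false (by omega) (by rintro (h | h) <;> [exact u h; exact w h])

lemma fw_gw (B : Fin a × Fin b → ℕ) (hb2 : ∀ p, B p ≤ 2)
    (hmono : ∀ p q : Fin a × Fin b, p ≤ q → B q ≤ B p) (p : Fin a × Fin b) :
    fw (gw B) p = B p := by
  have h1 : (∃ q, p ≤ q ∧ gw B q ≠ 0) ↔ 1 ≤ B p := by
    constructor
    · rintro ⟨q, hpq, hq⟩
      have hq1 : 1 ≤ B q := by
        rcases gw_ne_zero_iff.mp hq with h | h
        · exact h.1
        · have := h.1; omega
      have := hmono p q hpq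
      omega
    · intro h
      obtain ⟨m, hpm, hSm, hmax⟩ := exists_max (fun q => 1 ≤ B q) h
      refine ⟨m, hpm, gw_ne_zero_iff.mpr (Or.inl ⟨hSm, fun q hq => ?_⟩)⟩
      have := hmax q hq
      omega
  have h2 : (∃ q, p ≤ q ∧ gen2 (gw B) q) ↔ 2 ≤ B p := by
    constructor
    · rintro ⟨q, hpq, hg⟩
      have hle := hmono p q hpq
      rcases hg with hq2 | ⟨hne, r, hqr, hrne⟩
      · have hA2 : A2 B q := by
          unfold gw at hq2
          split_ifs at hq2 with u v w
          · exact v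
          · omega
          · exact w
          · omega
        have := hA2.1; omega
      · rcases gw_ne_zero_iff.mp hne with hA1 | hA2
        · have h0 := hA1.2 r hqr
          have h1r : 1 ≤ B r := by
            rcases gw_ne_zero_iff.mp hrne with h | h
            · exact h.1
            · have := h.1; omega
          omega
        · have := hA2.1; omega
    · intro h
      obtain ⟨m, hpm, hSm, hmax⟩ := exists_max (fun q => 2 ≤ B q) h
      have hA2 : A2 B m := ⟨hSm, fun q hq => by have := hmax q hq; omega⟩
      by_cases hA1 : A1 B m
      · exact ⟨m, hpm, Or.inl (by unfold gw; rw [if_pos hA1, if_pos hA2])⟩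
      · have hex : ∃ r, m < r ∧ 1 ≤ B r := by
          by_contra hc
          push_neg at hc
          exact hA1 ⟨by omega, fun q hq => by have := hc q hq; omega⟩
        obtain ⟨r, hmr, hr⟩ := hex
        obtain ⟨m', hrm', hSm', hmax'⟩ := exists_max (fun q => 1 ≤ B q) hr
        refine ⟨m, hpm, Or.inr ⟨gw_ne_zero_iff.mpr (Or.inr hA2), m',
          lt_of_lt_of_le hmr hrm', gw_ne_zero_iff.mpr (Or.inl ⟨hSm', fun q hq => ?_⟩)⟩⟩
        have := hmax' q hq
        omega
  unfold fw
  simp only [h1, h2]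
  have := hb2 p
  split_ifs <;> omega

end W2PP

/-- bijection between a × b nonnegative integer matrices of width at most 2
and a × b × 2 plane partitions. -/
theorem width_two_equiv_planePartitions (a b : ℕ) :
    Nonempty ({M : Fin a → Fin b → ℕ // widthLE M 2} ≃
      {B : Fin a → Fin b → ℕ // IsPlanePartition B 2}) := by
  refine ⟨⟨fun M => ⟨fun i j => W2PP.fw (fun p : Fin a × Fin b => M.1 p.1 p.2) (i, j),
      ?_, ?_, ?_⟩,
    fun B => ⟨fun i j => W2PP.gw (fun p : Fin a × Fin b => B.1 p.1 p.2) (i, j), ?_⟩,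
    ?_, ?_⟩⟩
  · intro i j
    exact W2PP.fw_le_two _ _
  · intro i j j' h
    exact W2PP.fw_mono _ (Prod.mk_le_mk.mpr ⟨le_rfl, h⟩)
  · intro j i i' h
    exact W2PP.fw_mono _ (Prod.mk_le_mk.mpr ⟨h, le_rfl⟩)
  · exact W2PP.gw_width _
  · rintro ⟨M, hM⟩
    apply Subtype.ext
    funext i j
    simp only
    have e : (fun p : Fin a × Fin b =>
        W2PP.fw (fun q : Fin a × Fin b => M q.1 q.2) (p.1, p.2)) =
        W2PP.fw (fun q : Fin a × Fin b => M q.1 q.2) := by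
      funext p
      rw [Prod.mk.eta]
    rw [e]
    exact W2PP.gw_fw M hM (i, j)
  · rintro ⟨B, hB⟩
    apply Subtype.ext
    funext i j
    simp only
    have e : (fun p : Fin a × Fin b =>
        W2PP.gw (fun q : Fin a × Fin b => B q.1 q.2) (p.1, p.2)) =
        W2PP.gw (fun q : Fin a × Fin b => B q.1 q.2) := by
      funext p
      rw [Prod.mk.eta]
    rw [e]
    refine W2PP.fw_gw _ (fun p => hB.1 p.1 p.2) ?_ (i, j)
    intro p q h
    calc B q.1 q.2 ≤ B p.1 q.2 := hB.2.2 q.2 p.1 q.1 h.1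
      _ ≤ B p.1 p.2 := hB.2.1 p.1 p.2 q.2 h.2
end

section
/- The number of Dyck words of length 2m+2 with exactly k valleys equals the number of k × (m-k) matrices with entries in {0,1,2} that are weakly decreasing along rows and columns, for all integers 1 ≤ k ≤ m. -/
open scoped BigOperators

namespace DyckPP

/-- block encoding: `(a,b)` stands for `u^(a+1) d^(b+1)` -/
def wd : List (ℕ × ℕ) → List Bool
  | [] => []
  | (a, b) :: l => List.replicate (a+1) true ++ (List.replicate (b+1) false ++ wd l)

def pfst (L : List (ℕ × ℕ)) (j : ℕ) : ℕ := ((L.take j).map Prod.fst).sum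
def psnd (L : List (ℕ × ℕ)) (j : ℕ) : ℕ := ((L.take j).map Prod.snd).sum

def SCset (k n : ℕ) : Set (List (ℕ × ℕ)) :=
  {L | L.length = k + 1 ∧ pfst L (k+1) = n ∧ psnd L (k+1) = n ∧ ∀ j, psnd L j ≤ pfst L j}

lemma getD_replicate' {α : Type*} (n : ℕ) (x d : α) (i : ℕ) :
    (List.replicate n x).getD i d = if i < n then x else d := by
  simp [List.getD_eq_getElem?_getD, List.getElem?_replicate, apply_ite (fun o : Option α => o.getD d)]

lemma wd_append (L₁ L₂ : List (ℕ × ℕ)) : wd (L₁ ++ L₂) = wd L₁ ++ wd L₂ := by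
  induction L₁ with
  | nil => simp [wd]
  | cons p l ih => obtain ⟨a, b⟩ := p; simp [wd, ih]

lemma length_wd (L : List (ℕ × ℕ)) :
    (wd L).length = 2 * L.length + ((L.map Prod.fst).sum + (L.map Prod.snd).sum) := by
  induction L with
  | nil => simp [wd]
  | cons p l ih => obtain ⟨a, b⟩ := p; simp [wd, ih]; ring

lemma count_true_wd (L : List (ℕ × ℕ)) :
    (wd L).count true = L.length + (L.map Prod.fst).sum := by
  induction L with
  | nil => simp [wd]
  | cons p l ih =>
    obtain ⟨a, b⟩ := p
    simp [wd, List.count_append, List.count_replicate, ih]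
    ring

lemma count_false_wd (L : List (ℕ × ℕ)) :
    (wd L).count false = L.length + (L.map Prod.snd).sum := by
  induction L with
  | nil => simp [wd]
  | cons p l ih =>
    obtain ⟨a, b⟩ := p
    simp [wd, List.count_append, List.count_replicate, ih]
    ring

lemma count_false_add_count_true (w : List Bool) :
    w.count false + w.count true = w.length := by
  induction w with
  | nil => simp
  | cons x l ih => cases x <;> simp [List.count_cons] <;> omega


end DyckPP
section Valleys
namespace DyckPP

lemma countP_congr' {α : Type*} {p q : α → Bool} {l : List α}
    (h : ∀ x ∈ l, p x = q x) : l.countP p = l.countP q := by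
  rw [List.countP_eq_length_filter, List.countP_eq_length_filter, List.filter_congr h]

lemma numValleys_eq (w : List Bool) :
    numValleys w = (List.range w.length).countP (isValleyStart w) := by
  rw [numValleys, valleyPositions, List.countP_eq_length_filter]

-- getD of the block word beyond the first block
lemma getD_wd_cons_right (a b : ℕ) (r : List Bool) (i : ℕ) (d : Bool) :
    (List.replicate (a+1) true ++ (List.replicate (b+1) false ++ r)).getD (a + b + 2 + i) d
      = r.getD i d := by
  rw [List.getD_append_right _ _ _ _ (by simp; omega),
      List.getD_append_right _ _ _ _ (by simp; omega)]
  congr 1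
  simp
  omega

lemma getD_wd_cons_left (a b : ℕ) (r : List Bool) (i : ℕ) (d : Bool) (hi : i < a + b + 2) :
    (List.replicate (a+1) true ++ (List.replicate (b+1) false ++ r)).getD i d
      = (if i < a + 1 then true else false) := by
  by_cases h : i < a + 1
  · rw [List.getD_append _ _ _ _ (by simpa using h), getD_replicate']
    simp [h]
  · rw [List.getD_append_right _ _ _ _ (by simpa using h),
        List.getD_append _ _ _ _ (by simp; omega), getD_replicate']
    simp [h]
    omega

lemma head_getD_wd (l : List (ℕ × ℕ)) : (wd l).getD 0 false = !l.isEmpty := by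
  cases l with
  | nil => simp [wd]
  | cons p l' =>
    obtain ⟨a, b⟩ := p
    rw [wd, List.getD_append _ _ _ _ (by simp), getD_replicate']
    simp

lemma isValleyStart_wd_cons (a b : ℕ) (l : List (ℕ × ℕ)) (i : ℕ) (hi : i < a + b + 2) :
    isValleyStart (wd ((a, b) :: l)) i = (decide (i = a + b + 1) && !l.isEmpty) := by
  rw [isValleyStart, wd]
  rcases Nat.lt_or_ge i (a + b + 1) with h | h
  · rw [getD_wd_cons_left a b _ i true (by omega),
        getD_wd_cons_left a b _ (i+1) false (by omega)]
    have : decide (i = a + b + 1) = false := by simp; omega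
    rw [this]
    by_cases h1 : i < a + 1
    · simp [h1]
    · have h2 : ¬ (i + 1 < a + 1) := by omega
      simp [h1, h2]
  · have hie : i = a + b + 1 := by omega
    subst hie
    rw [getD_wd_cons_left a b _ _ true (by omega)]
    have : a + b + 1 + 1 = a + b + 2 + 0 := by ring
    rw [this, getD_wd_cons_right, head_getD_wd]
    simp

lemma numValleys_wd_cons (a b : ℕ) (l : List (ℕ × ℕ)) :
    numValleys (wd ((a, b) :: l)) = (if l.isEmpty then 0 else 1) + numValleys (wd l) := by
  have hlen : (wd ((a, b) :: l)).length = (a + b + 2) + (wd l).length := by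
    rw [wd]; simp; ring
  rw [numValleys_eq, hlen, List.range_add, List.countP_append, List.countP_map]
  have h2 : List.countP ((isValleyStart (wd ((a,b) :: l))) ∘ (fun x => a + b + 2 + x))
      (List.range (wd l).length) = numValleys (wd l) := by
    rw [numValleys_eq]
    apply countP_congr'
    intro x _
    show isValleyStart (wd ((a,b) :: l)) (a + b + 2 + x) = isValleyStart (wd l) x
    rw [isValleyStart, isValleyStart, wd]
    rw [getD_wd_cons_right]
    have : a + b + 2 + x + 1 = a + b + 2 + (x + 1) := by ring
    rw [this, getD_wd_cons_right]
  rw [h2]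
  congr 1
  have h1 : ∀ x ∈ List.range (a + b + 2), isValleyStart (wd ((a,b) :: l)) x
      = (decide (x = a + b + 1) && !l.isEmpty) := by
    intro x hx
    exact isValleyStart_wd_cons a b l x (List.mem_range.mp hx)
  rw [countP_congr' h1]
  by_cases hl : l.isEmpty
  · simp [hl]
  · simp only [hl, Bool.not_false, Bool.and_true]
    rw [if_neg (by simpa using hl)]
    have : List.countP (fun x => decide (x = a + b + 1)) (List.range (a + b + 2))
        = List.count (a + b + 1) (List.range (a + b + 2)) := by
      rw [List.count]
      apply countP_congr'
      intro x _
      cases h : decide (x = a + b + 1) <;> simp_all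
    rw [this, List.count_eq_one_of_mem List.nodup_range (by simp)]

lemma numValleys_wd (L : List (ℕ × ℕ)) (hL : L ≠ []) :
    numValleys (wd L) + 1 = L.length := by
  induction L with
  | nil => simp at hL
  | cons p l ih =>
    obtain ⟨a, b⟩ := p
    rw [numValleys_wd_cons]
    cases l with
    | nil => simp [wd, numValleys, valleyPositions]
    | cons q l' =>
      have h := ih (by simp)
      simp at h ⊢
      omega

end DyckPP
end Valleys
section DyckCond
namespace DyckPP

lemma pfst_zero (L : List (ℕ × ℕ)) : pfst L 0 = 0 := by simp [pfst]
lemma psnd_zero (L : List (ℕ × ℕ)) : psnd L 0 = 0 := by simp [psnd]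

lemma pfst_cons (a b : ℕ) (l : List (ℕ × ℕ)) (j : ℕ) :
    pfst ((a, b) :: l) (j + 1) = a + pfst l j := by simp [pfst]

lemma psnd_cons (a b : ℕ) (l : List (ℕ × ℕ)) (j : ℕ) :
    psnd ((a, b) :: l) (j + 1) = b + psnd l j := by simp [psnd]

lemma pfst_of_le (L : List (ℕ × ℕ)) {j : ℕ} (h : L.length ≤ j) :
    pfst L j = (L.map Prod.fst).sum := by
  rw [pfst, List.take_of_length_le h]

lemma psnd_of_le (L : List (ℕ × ℕ)) {j : ℕ} (h : L.length ≤ j) :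
    psnd L j = (L.map Prod.snd).sum := by
  rw [psnd, List.take_of_length_le h]

lemma pfst_mono (L : List (ℕ × ℕ)) : Monotone (pfst L) := by
  intro j j' h
  rw [pfst, pfst, List.map_take, List.map_take]
  have h1 : List.take j (List.map Prod.fst L) = List.take j (List.take j' (List.map Prod.fst L)) := by
    rw [List.take_take, min_eq_left h]
  rw [h1]
  exact Nat.le.intro (List.sum_take_add_sum_drop _ _)

lemma psnd_mono (L : List (ℕ × ℕ)) : Monotone (psnd L) := by
  intro j j' h
  rw [psnd, psnd, List.map_take, List.map_take]
  have h1 : List.take j (List.map Prod.snd L) = List.take j (List.take j' (List.map Prod.snd L)) := by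
    rw [List.take_take, min_eq_left h]
  rw [h1]
  exact Nat.le.intro (List.sum_take_add_sum_drop _ _)

lemma count_take_wd_cons (a b : ℕ) (l : List (ℕ × ℕ)) (t : ℕ) (x : Bool) :
    ((wd ((a, b) :: l)).take t).count x =
      (List.replicate (min t (a+1)) true).count x
        + (List.replicate (min (t - (a+1)) (b+1)) false).count x
        + ((wd l).take (t - (a+1) - (b+1))).count x := by
  rw [wd, List.take_append, List.take_append,
      List.count_append, List.count_append, List.take_replicate, List.take_replicate]
  simp [Nat.min_comm]
  omega

lemma dyck_of_dom : ∀ (L : List (ℕ × ℕ)) (c : ℕ),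
    (∀ j, psnd L j ≤ pfst L j + c) →
    ∀ t, ((wd L).take t).count false ≤ ((wd L).take t).count true + c := by
  intro L
  induction L with
  | nil => intro c _ t; simp [wd]
  | cons p l ih =>
    obtain ⟨a, b⟩ := p
    intro c hdom t
    have hba : b ≤ a + c := by
      have := hdom 1
      rw [pfst_cons, psnd_cons, pfst_zero, psnd_zero] at this
      omega
    have hdom' : ∀ j, psnd l j ≤ pfst l j + (a + c - b) := by
      intro j
      have := hdom (j + 1)
      rw [pfst_cons, psnd_cons] at this
      omega
    have hih := ih (a + c - b) hdom' (t - (a+1) - (b+1))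
    have hcf : ((wd l).take (t - (a+1) - (b+1))).count false ≤ t - (a+1) - (b+1) :=
      le_trans List.count_le_length (by simpa using List.length_take_le _ _)
    rw [count_take_wd_cons, count_take_wd_cons]
    simp [List.count_replicate]
    omega

lemma dom_of_dyck (L : List (ℕ × ℕ))
    (h : ∀ t, ((wd L).take t).count false ≤ ((wd L).take t).count true) :
    ∀ j, psnd L j ≤ pfst L j := by
  intro j
  have hsplit : wd L = wd (L.take j) ++ wd (L.drop j) := by
    rw [← wd_append, List.take_append_drop]
  have htake : (wd L).take ((wd (L.take j)).length) = wd (L.take j) := by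
    rw [hsplit, List.take_left]
  have := h ((wd (L.take j)).length)
  rw [htake, count_true_wd, count_false_wd] at this
  rw [pfst, psnd]
  omega

end DyckPP
end DyckCond
section Decomp
namespace DyckPP

lemma takeWhile_wd_true (a b : ℕ) (l : List (ℕ × ℕ)) :
    (wd ((a, b) :: l)).takeWhile (· == true) = List.replicate (a+1) true := by
  simp [wd, List.takeWhile_append, List.takeWhile_replicate]

lemma dropWhile_wd_true (a b : ℕ) (l : List (ℕ × ℕ)) :
    (wd ((a, b) :: l)).dropWhile (· == true) = List.replicate (b+1) false ++ wd l := by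
  simp [wd, List.dropWhile_append, List.dropWhile_replicate]

lemma takeWhile_false_wd (l : List (ℕ × ℕ)) :
    (wd l).takeWhile (· == false) = [] := by
  cases l with
  | nil => simp [wd]
  | cons p l' =>
    obtain ⟨a, b⟩ := p
    simp [wd, List.takeWhile_append, List.takeWhile_replicate]

lemma wd_inj : Function.Injective wd := by
  intro L L' h
  induction L generalizing L' with
  | nil =>
    cases L' with
    | nil => rfl
    | cons p l =>
      obtain ⟨a, b⟩ := p; exfalso
      have := congrArg List.length h; simp [wd] at this; omega
  | cons p l ih =>
    obtain ⟨a, b⟩ := p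
    cases L' with
    | nil =>
      exfalso; have := congrArg List.length h; simp [wd] at this
    | cons q l' =>
      obtain ⟨a', b'⟩ := q
      have h1 := congrArg (List.takeWhile (· == true)) h
      rw [takeWhile_wd_true, takeWhile_wd_true] at h1
      have ha : a = a' := by
        have := congrArg List.length h1; simpa using this
      have h2 := congrArg (List.dropWhile (· == true)) h
      rw [dropWhile_wd_true, dropWhile_wd_true] at h2
      have h3 := congrArg (List.takeWhile (· == false)) h2
      rw [List.takeWhile_append, List.takeWhile_append, List.takeWhile_replicate,
          List.takeWhile_replicate, takeWhile_false_wd, takeWhile_false_wd] at h3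
      simp at h3
      have hb : b = b' := h3
      subst ha; subst hb
      have h4 := List.append_cancel_left h2
      rw [ih h4]

lemma exists_wd : ∀ (N : ℕ) (w : List Bool), w.length ≤ N →
    w.head? = some true → w.getLast? = some false → ∃ L, L ≠ [] ∧ w = wd L := by
  intro N
  induction N with
  | zero =>
    intro w hlen h1 _
    have : w = [] := List.length_eq_zero_iff.mp (Nat.le_zero.mp hlen)
    subst this; simp at h1
  | succ N ih =>
    intro w hlen h1 h2
    have hwne : w ≠ [] := by intro h; subst h; simp at h1
    have hw : w.takeWhile (· == true) ++ w.dropWhile (· == true) = w :=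
      List.takeWhile_append_dropWhile
    have hprep : w.takeWhile (· == true)
        = List.replicate (w.takeWhile (· == true)).length true :=
      List.eq_replicate_of_mem (fun x hx => by simpa using List.mem_takeWhile_imp hx)
    have hpne : w.takeWhile (· == true) ≠ [] := by
      intro h0
      have hrw : w.dropWhile (· == true) = w := by
        have h5 := hw; rw [h0, List.nil_append] at h5; exact h5
      have hne' : w.dropWhile (· == true) ≠ [] := by rw [hrw]; exact hwne
      have hh := List.head_dropWhile_not (· == true) (l := w) hne'
      have hh2 : (w.dropWhile (· == true)).head? = some true := by rw [hrw]; exact h1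
      rw [List.head?_eq_head hne'] at hh2
      injection hh2 with hh2
      rw [hh2] at hh
      simp at hh
    have hrne : w.dropWhile (· == true) ≠ [] := by
      intro h0
      have hwp : w = w.takeWhile (· == true) := by
        have h5 := hw; rw [h0, List.append_nil] at h5; exact h5.symm
      have hlast : w.getLast? = some true := by
        rw [hwp, hprep]
        cases hn : (w.takeWhile (· == true)).length with
        | zero =>
          exfalso; exact hpne (List.length_eq_zero_iff.mp hn)
        | succ nn => rw [List.replicate_succ', List.getLast?_append]; simp
      rw [h2] at hlast; simp at hlast
    have hrfalse : (w.dropWhile (· == true)).head hrne = false := by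
      have := List.head_dropWhile_not (· == true) (l := w) hrne
      simpa using this
    set r := w.dropWhile (· == true) with hr
    have hrqs : r.takeWhile (· == false) ++ r.dropWhile (· == false) = r :=
      List.takeWhile_append_dropWhile
    have hqrep : r.takeWhile (· == false)
        = List.replicate (r.takeWhile (· == false)).length false :=
      List.eq_replicate_of_mem (fun x hx => by simpa using List.mem_takeWhile_imp hx)
    have hqne : r.takeWhile (· == false) ≠ [] := by
      intro h0
      have hsr : r.dropWhile (· == false) = r := by
        have h5 := hrqs; rw [h0, List.nil_append] at h5; exact h5
      have hne' : r.dropWhile (· == false) ≠ [] := by rw [hsr]; exact hrne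
      have hh := List.head_dropWhile_not (· == false) (l := r) hne'
      have hh2 : (r.dropWhile (· == false)).head? = some false := by
        rw [hsr, List.head?_eq_head hrne, hrfalse]
      rw [List.head?_eq_head hne'] at hh2
      injection hh2 with hh2
      rw [hh2] at hh
      simp at hh
    have hplen : (w.takeWhile (· == true)).length - 1 + 1
        = (w.takeWhile (· == true)).length := by
      have : (w.takeWhile (· == true)).length ≠ 0 :=
        fun h0 => hpne (List.length_eq_zero_iff.mp h0)
      omega
    have hqlen : (r.takeWhile (· == false)).length - 1 + 1
        = (r.takeWhile (· == false)).length := by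
      have : (r.takeWhile (· == false)).length ≠ 0 :=
        fun h0 => hqne (List.length_eq_zero_iff.mp h0)
      omega
    by_cases hsnil : r.dropWhile (· == false) = []
    · refine ⟨[((w.takeWhile (· == true)).length - 1,
        (r.takeWhile (· == false)).length - 1)], by simp, ?_⟩
      rw [wd, wd, hplen, hqlen, List.append_nil, ← hprep, ← hqrep]
      conv_lhs => rw [← hw, ← hrqs, hsnil, List.append_nil]
    · have hshead : (r.dropWhile (· == false)).head? = some true := by
        have := List.head_dropWhile_not (· == false) (l := r) hsnil
        rw [List.head?_eq_head hsnil]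
        simp at this
        simp [this]
      have hslast : (r.dropWhile (· == false)).getLast? = some false := by
        have hgl : w.getLast? = (r.dropWhile (· == false)).getLast? := by
          conv_lhs => rw [← hw, ← hrqs]
          rw [List.getLast?_append, List.getLast?_append,
            List.getLast?_eq_getLast hsnil]
          simp
        rw [← hgl, h2]
      have hslen : (r.dropWhile (· == false)).length ≤ N := by
        have h5 : w.length = (w.takeWhile (· == true)).length
            + ((r.takeWhile (· == false)).length + (r.dropWhile (· == false)).length) := by
          conv_lhs => rw [← hw, ← hrqs]
          rw [List.length_append, List.length_append]
        omega
      obtain ⟨L', hL'ne, hL'⟩ := ih _ hslen hshead hslast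
      refine ⟨((w.takeWhile (· == true)).length - 1,
        (r.takeWhile (· == false)).length - 1) :: L', by simp, ?_⟩
      rw [wd, hplen, hqlen, ← hprep, ← hqrep, ← hL']
      conv_lhs => rw [← hw, ← hrqs]

end DyckPP
end Decomp
section DyckImage
namespace DyckPP

lemma dyck_image (m k : ℕ) (hkm : k ≤ m) :
    {w : List Bool | IsDyckWord (m + 1) w ∧ numValleys w = k} = wd '' SCset k (m - k) := by
  ext w
  constructor
  · rintro ⟨⟨hlen, hcount, hpre⟩, hval⟩
    have hwne : w ≠ [] := by
      intro h; subst h; simp at hlen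
    have hhead : w.head? = some true := by
      cases w with
      | nil => exact absurd rfl hwne
      | cons x t =>
        have := hpre 1
        cases x with
        | false => simp [List.count_cons] at this
        | true => rfl
    have hcf : w.count false = m + 1 := by
      have := count_false_add_count_true w
      omega
    have hlast : w.getLast? = some false := by
      rw [List.getLast?_eq_getLast (l := w) hwne]
      congr 1
      by_contra hg
      have hg' : w.getLast hwne = true := by
        cases h : w.getLast hwne
        · exact absurd h hg
        · rfl
      have hdl : w = w.dropLast ++ [w.getLast hwne] := (List.dropLast_append_getLast hwne).symm
      have hct : w.count true = w.dropLast.count true + 1 := by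
        conv_lhs => rw [hdl]
        rw [List.count_append, hg']
        simp
      have hcff : w.count false = w.dropLast.count false := by
        conv_lhs => rw [hdl]
        rw [List.count_append, hg']
        simp
      have htk : w.take (w.length - 1) = w.dropLast := (List.dropLast_eq_take (l := w)).symm
      have := hpre (w.length - 1)
      rw [htk] at this
      omega
    obtain ⟨L, hLne, hwd⟩ := exists_wd w.length w le_rfl hhead hlast
    have hvL := numValleys_wd L hLne
    rw [← hwd] at hvL
    have hlenL : L.length = k + 1 := by omega
    have hSf : (L.map Prod.fst).sum = m - k := by
      have := count_true_wd L
      rw [← hwd] at this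
      omega
    have hSs : (L.map Prod.snd).sum = m - k := by
      have := count_false_wd L
      rw [← hwd] at this
      omega
    refine ⟨L, ⟨hlenL, ?_, ?_, ?_⟩, hwd.symm⟩
    · rw [pfst_of_le L (le_of_eq hlenL)]; exact hSf
    · rw [psnd_of_le L (le_of_eq hlenL)]; exact hSs
    · exact dom_of_dyck L (by rw [← hwd]; exact hpre)
  · rintro ⟨L, ⟨hlenL, hf, hs, hdom⟩, rfl⟩
    have hSf : (L.map Prod.fst).sum = m - k := by
      rw [← pfst_of_le L (le_of_eq hlenL)]; exact hf
    have hSs : (L.map Prod.snd).sum = m - k := by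
      rw [← psnd_of_le L (le_of_eq hlenL)]; exact hs
    have hLne : L ≠ [] := by
      intro h; subst h; simp at hlenL
    refine ⟨⟨?_, ?_, ?_⟩, ?_⟩
    · rw [length_wd, hlenL, hSf, hSs]; omega
    · rw [count_true_wd, hlenL, hSf]; omega
    · intro t
      have := dyck_of_dom L 0 (fun j => by simpa using hdom j) t
      simpa using this
    · have := numValleys_wd L hLne
      omega

end DyckPP
end DyckImage
section PP
namespace DyckPP

def matOf (k n : ℕ) (L : List (ℕ × ℕ)) : Fin k → Fin n → ℕ := fun i j =>
  if (j : ℕ) < psnd L (k - (i : ℕ)) then 2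
  else if (j : ℕ) < pfst L (k - (i : ℕ)) then 1 else 0

lemma pfst_succ (L : List (ℕ × ℕ)) (v : ℕ) (h : v < L.length) :
    pfst L (v + 1) = pfst L v + (L[v]).1 := by
  rw [pfst, pfst, List.map_take, List.map_take,
    List.sum_take_succ _ v (by simpa using h), List.getElem_map]

lemma psnd_succ (L : List (ℕ × ℕ)) (v : ℕ) (h : v < L.length) :
    psnd L (v + 1) = psnd L v + (L[v]).2 := by
  rw [psnd, psnd, List.map_take, List.map_take,
    List.sum_take_succ _ v (by simpa using h), List.getElem_map]

lemma card_filter_thresh {n : ℕ} (r : Fin n → ℕ)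
    (hmono : ∀ j j' : Fin n, j ≤ j' → r j' ≤ r j) (c : ℕ) (j : Fin n) :
    ((j : ℕ) < (Finset.univ.filter (fun j' => c ≤ r j')).card) ↔ c ≤ r j := by
  constructor
  · intro h
    by_contra hc
    have hsub : Finset.univ.filter (fun j' => c ≤ r j') ⊆ Finset.Iio j := by
      intro x hx
      rw [Finset.mem_filter] at hx
      rw [Finset.mem_Iio]
      by_contra hxj
      push_neg at hxj
      exact hc (le_trans hx.2 (hmono j x hxj))
    have := Finset.card_le_card hsub
    rw [Fin.card_Iio] at this
    omega
  · intro h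
    have hsub : Finset.Iic j ⊆ Finset.univ.filter (fun j' => c ≤ r j') := by
      intro x hx
      rw [Finset.mem_Iic] at hx
      rw [Finset.mem_filter]
      exact ⟨Finset.mem_univ x, le_trans h (hmono x j hx)⟩
    have := Finset.card_le_card hsub
    rw [Fin.card_Iic] at this
    omega

/-- the `c`-threshold profile of a matrix, as a function on `{0, ..., k+1}`. -/
def Af {k n : ℕ} (M : Fin k → Fin n → ℕ) (c : ℕ) (v : ℕ) : ℕ :=
  if h : 1 ≤ v ∧ v ≤ k then
    (Finset.univ.filter (fun j : Fin n => c ≤ M ⟨k - v, by omega⟩ j)).card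
  else if v = 0 then 0 else n

def Lof {k n : ℕ} (M : Fin k → Fin n → ℕ) : List (ℕ × ℕ) :=
  List.ofFn (fun t : Fin (k + 1) => (Af M 1 ((t : ℕ) + 1) - Af M 1 t, Af M 2 ((t : ℕ) + 1) - Af M 2 t))

lemma Af_zero {k n : ℕ} (M : Fin k → Fin n → ℕ) (c : ℕ) : Af M c 0 = 0 := by
  simp [Af]

lemma Af_top {k n : ℕ} (M : Fin k → Fin n → ℕ) (c : ℕ) : Af M c (k + 1) = n := by
  rw [Af, dif_neg (by omega), if_neg (by omega)]

lemma Af_mono {k n : ℕ} (M : Fin k → Fin n → ℕ) (c : ℕ)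
    (hcol : ∀ (j : Fin n), ∀ i i' : Fin k, i ≤ i' → M i' j ≤ M i j) (v : ℕ) :
    Af M c v ≤ Af M c (v + 1) := by
  by_cases h0 : v = 0
  · subst h0; rw [Af_zero]; exact Nat.zero_le _
  by_cases hk1 : v + 1 ≤ k
  · rw [Af, dif_pos ⟨by omega, by omega⟩, Af, dif_pos ⟨by omega, by omega⟩]
    apply Finset.card_le_card
    intro x hx
    rw [Finset.mem_filter] at hx ⊢
    refine ⟨Finset.mem_univ x, le_trans hx.2 ?_⟩
    exact hcol x ⟨k - (v+1), by omega⟩ ⟨k - v, by omega⟩ (by rw [Fin.le_def]; simp; omega)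
  by_cases hkv : v ≤ k
  · rw [Af, dif_pos ⟨by omega, hkv⟩, Af, dif_neg (by omega), if_neg (by omega)]
    exact le_trans (Finset.card_filter_le _ _) (by simp)
  · rw [Af, dif_neg (by omega), if_neg h0, Af, dif_neg (by omega), if_neg (by omega)]

lemma Af_le_Af {k n : ℕ} (M : Fin k → Fin n → ℕ) (v : ℕ) : Af M 2 v ≤ Af M 1 v := by
  rw [Af, Af]
  split_ifs with h h2
  · apply Finset.card_le_card
    intro x hx
    rw [Finset.mem_filter] at hx ⊢
    exact ⟨Finset.mem_univ x, by omega⟩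
  · exact le_rfl
  · exact le_rfl

lemma length_Lof {k n : ℕ} (M : Fin k → Fin n → ℕ) : (Lof M).length = k + 1 := by
  simp [Lof]

lemma pfst_Lof {k n : ℕ} (M : Fin k → Fin n → ℕ)
    (hcol : ∀ (j : Fin n), ∀ i i' : Fin k, i ≤ i' → M i' j ≤ M i j) :
    ∀ v, v ≤ k + 1 → pfst (Lof M) v = Af M 1 v := by
  intro v
  induction v with
  | zero => intro _; rw [pfst_zero, Af_zero]
  | succ v ih =>
    intro hv
    have hlt : v < (Lof M).length := by rw [length_Lof]; omega
    rw [pfst_succ _ v hlt, ih (by omega)]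
    have hget : (Lof M)[v] = (Af M 1 (v + 1) - Af M 1 v, Af M 2 (v + 1) - Af M 2 v) := by
      simp only [Lof, List.getElem_ofFn]
    rw [hget]
    have := Af_mono M 1 hcol v
    simp
    omega

lemma psnd_Lof {k n : ℕ} (M : Fin k → Fin n → ℕ)
    (hcol : ∀ (j : Fin n), ∀ i i' : Fin k, i ≤ i' → M i' j ≤ M i j) :
    ∀ v, v ≤ k + 1 → psnd (Lof M) v = Af M 2 v := by
  intro v
  induction v with
  | zero => intro _; rw [psnd_zero, Af_zero]
  | succ v ih =>
    intro hv
    have hlt : v < (Lof M).length := by rw [length_Lof]; omega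
    rw [psnd_succ _ v hlt, ih (by omega)]
    have hget : (Lof M)[v] = (Af M 1 (v + 1) - Af M 1 v, Af M 2 (v + 1) - Af M 2 v) := by
      simp only [Lof, List.getElem_ofFn]
    rw [hget]
    have := Af_mono M 2 hcol v
    simp
    omega

end DyckPP
end PP
section Final
namespace DyckPP

lemma pp_image (k n : ℕ) (hk : 1 ≤ k) :
    {M : Fin k → Fin n → ℕ | IsPlanePartition M 2} = matOf k n '' SCset k n := by
  ext M
  constructor
  · rintro ⟨hbound, hrow, hcol⟩
    refine ⟨Lof M, ⟨length_Lof M, ?_, ?_, ?_⟩, ?_⟩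
    · rw [pfst_Lof M hcol (k+1) le_rfl, Af_top]
    · rw [psnd_Lof M hcol (k+1) le_rfl, Af_top]
    · intro j
      by_cases hj : j ≤ k + 1
      · rw [pfst_Lof M hcol j hj, psnd_Lof M hcol j hj]; exact Af_le_Af M j
      · have e1 : pfst (Lof M) j = pfst (Lof M) (k+1) := by
          rw [pfst_of_le _ (j := j) (by rw [length_Lof]; omega),
            pfst_of_le _ (le_of_eq (length_Lof M))]
        have e2 : psnd (Lof M) j = psnd (Lof M) (k+1) := by
          rw [psnd_of_le _ (j := j) (by rw [length_Lof]; omega),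
            psnd_of_le _ (le_of_eq (length_Lof M))]
        rw [e1, e2, pfst_Lof M hcol (k+1) le_rfl, psnd_Lof M hcol (k+1) le_rfl]
        exact Af_le_Af M (k+1)
    · funext i j
      have hi : (i : ℕ) < k := i.isLt
      have hv1 : k - (i : ℕ) ≤ k + 1 := by omega
      simp only [matOf]
      rw [psnd_Lof M hcol _ hv1, pfst_Lof M hcol _ hv1]
      have hidx : ∀ (h : k - (k - (i:ℕ)) < k), (⟨k - (k - (i:ℕ)), h⟩ : Fin k) = i := by
        intro h; apply Fin.ext; simp; omega
      have hA : Af M 1 (k - (i:ℕ)) = (Finset.univ.filter (fun j' : Fin n => 1 ≤ M i j')).card := by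
        rw [Af, dif_pos ⟨by omega, by omega⟩, hidx]
      have hB : Af M 2 (k - (i:ℕ)) = (Finset.univ.filter (fun j' : Fin n => 2 ≤ M i j')).card := by
        rw [Af, dif_pos ⟨by omega, by omega⟩, hidx]
      rw [hA, hB]
      have h1 := card_filter_thresh (M i) (fun a b hab => hrow i a b hab) 1 j
      have h2 := card_filter_thresh (M i) (fun a b hab => hrow i a b hab) 2 j
      have hb := hbound i j
      split_ifs with hc1 hc2
      · rw [h2] at hc1; omega
      · rw [h1] at hc2; omega
      · rw [h2] at hc1; rw [h1] at hc2; omega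
  · rintro ⟨L, ⟨hlenL, hf, hs, hdom⟩, rfl⟩
    refine ⟨?_, ?_, ?_⟩
    · intro i j; simp only [matOf]; split_ifs <;> omega
    · intro i j j' hjj'
      have hj := Fin.le_def.mp hjj'
      simp only [matOf]; split_ifs <;> omega
    · intro j i i' hii'
      have hii := Fin.le_def.mp hii'
      have h1 : pfst L (k - (i':ℕ)) ≤ pfst L (k - (i:ℕ)) := pfst_mono L (by omega)
      have h2 : psnd L (k - (i':ℕ)) ≤ psnd L (k - (i:ℕ)) := psnd_mono L (by omega)
      simp only [matOf]; split_ifs <;> omega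

lemma matOf_eq_aux (k n : ℕ) (hk : 1 ≤ k) {L L' : List (ℕ × ℕ)}
    (hL : L ∈ SCset k n) (hL' : L' ∈ SCset k n)
    (heq : matOf k n L = matOf k n L') (v : ℕ) (h1v : 1 ≤ v) (h2v : v ≤ k) :
    pfst L v ≤ pfst L' v ∧ psnd L v ≤ psnd L' v := by
  obtain ⟨hlen, hfn, hsn, hdom⟩ := hL
  obtain ⟨hlen', hfn', hsn', hdom'⟩ := hL'
  have hfb : pfst L v ≤ n := by rw [← hfn]; exact pfst_mono L (by omega)
  have hsb : psnd L v ≤ n := le_trans (hdom v) hfb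
  have hi : k - v < k := by omega
  have hv' : k - ((⟨k - v, hi⟩ : Fin k) : ℕ) = v := by simp; omega
  constructor
  · by_contra hcon
    push_neg at hcon
    have hj0 : pfst L' v < n := lt_of_lt_of_le hcon hfb
    have hthis := congrFun (congrFun heq ⟨k - v, hi⟩) ⟨pfst L' v, hj0⟩
    simp only [matOf, hv'] at hthis
    have hd := hdom v
    have hd' := hdom' v
    split_ifs at hthis <;> simp at hthis <;> omega
  · by_contra hcon
    push_neg at hcon
    have hj0 : psnd L' v < n := lt_of_lt_of_le hcon hsb
    have hthis := congrFun (congrFun heq ⟨k - v, hi⟩) ⟨psnd L' v, hj0⟩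
    simp only [matOf, hv'] at hthis
    have hd := hdom v
    have hd' := hdom' v
    split_ifs at hthis <;> simp at hthis <;> omega

lemma matOf_injOn (k n : ℕ) (hk : 1 ≤ k) : Set.InjOn (matOf k n) (SCset k n) := by
  intro L hL L' hL' heq
  have key : ∀ v, v ≤ k + 1 → pfst L v = pfst L' v ∧ psnd L v = psnd L' v := by
    intro v hv
    rcases Nat.eq_zero_or_pos v with h0 | h1
    · subst h0; rw [pfst_zero, pfst_zero, psnd_zero, psnd_zero]; exact ⟨rfl, rfl⟩
    rcases eq_or_lt_of_le hv with he | hlt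
    · subst he
      rw [hL.2.1, hL'.2.1, hL.2.2.1, hL'.2.2.1]; exact ⟨rfl, rfl⟩
    · have h2v : v ≤ k := by omega
      have a1 := matOf_eq_aux k n hk hL hL' heq v h1 h2v
      have a2 := matOf_eq_aux k n hk hL' hL heq.symm v h1 h2v
      exact ⟨le_antisymm a1.1 a2.1, le_antisymm a1.2 a2.2⟩
  apply List.ext_get (by rw [hL.1, hL'.1])
  intro t h1 h2
  have ht : t < k + 1 := by rw [hL.1] at h1; exact h1
  have ef1 := pfst_succ L t h1
  have ef2 := pfst_succ L' t h2
  have es1 := psnd_succ L t h1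
  have es2 := psnd_succ L' t h2
  have k1 := key t (by omega)
  have k2 := key (t + 1) (by omega)
  have hgf : (L.get ⟨t, h1⟩).1 = (L'.get ⟨t, h2⟩).1 := by
    show (L[t]).1 = (L'[t]).1
    omega
  have hgs : (L.get ⟨t, h1⟩).2 = (L'.get ⟨t, h2⟩).2 := by
    show (L[t]).2 = (L'[t]).2
    omega
  exact Prod.ext hgf hgs

end DyckPP
end Final


/-- the number of Dyck words of length 2m+2 with exactly k valleys equals
the number of k × (m-k) × 2 plane partitions. -/
theorem dyck_count_eq_planePartition_count (m k : ℕ) (hk : 1 ≤ k) (hkm : k ≤ m) :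
    {w : List Bool | IsDyckWord (m + 1) w ∧ numValleys w = k}.ncard =
    {M : Fin k → Fin (m - k) → ℕ | IsPlanePartition M 2}.ncard := by
  rw [DyckPP.dyck_image m k hkm, DyckPP.pp_image k (m - k) hk,
    Set.ncard_image_of_injOn (fun a _ b _ h => DyckPP.wd_inj h),
    Set.ncard_image_of_injOn (DyckPP.matOf_injOn k (m - k) hk)]
end
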